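/- arXiv:2411.11703 — 6 statements merged into one kernel-verified Lean document; each statement's English description precedes it below -/
import Mathlib

section
/- Let K ≥ 2 and identify ℝ² with ℂ. Let Ω = {e^{ikπ/K} : k = 0,…,2K−1} be the vertex set of a regular 2K-gon and define σ(e^{ikπ/K}) = (−1)^k. Then for every ω ∈ Ω, the set Ω_ω of nearest neighbours of ω in Ω consists exactly of the two adjacent vertices ωe^{iπ/K} and ωe^{−iπ/K}, each at distance 2 sin(π/(2K)) from ω, and σ(ω) Σ_{ϖ∈Ω_ω} σ(ϖ)(ϖ−ω)/|ϖ−ω| = 2 sin(π/(2K)) ω. In particular the regular 2K-gon with alternating signs satisfies the symmetry hypothesis of the multi-soliton construction with γ = 2 sin(π/|Ω|). -/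
/-!
The vertices are the powers of the primitive `2K`-th root of unity `ζ = e^{iπ/K}`, so every vertex
other than `ω` is `ω ζ^m` with `1 ≤ m ≤ 2K - 1`, at distance `|ζ^m - 1| = 2 sin(πm/(2K))`. As `sin`
is strictly larger on `(π/(2K), π - π/(2K))` than at its endpoints, the nearest neighbours are
exactly `ω ζ^{±1}`, at distance `δ = 2 sin(π/(2K))`. Both carry the sign opposite to `ω`, so the
signed sum is `-ω (ζ + ζ⁻¹ - 2) / δ`, and `2 - ζ - ζ⁻¹ = (ζ - 1)(ζ̄ - 1) = δ²`.
-/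

open Complex
open scoped Classical

/-- The set of nearest neighbours of `ω` in a finite configuration `Ω ⊂ ℂ`:
the points of `Ω \ {ω}` minimizing the distance to `ω`. -/
noncomputable def nearestNeighbours (Ω : Finset ℂ) (ω : ℂ) : Finset ℂ :=
  Ω.filter (fun ϖ => ϖ ≠ ω ∧ ∀ ϖ' ∈ Ω, ϖ' ≠ ω → ‖ϖ - ω‖ ≤ ‖ϖ' - ω‖)

theorem nearestNeighbours_eq_of_forall_dist {Ω S : Finset ℂ} {ω : ℂ} {δ : ℝ} (hδ : 0 < δ)
    (hSΩ : S ⊆ Ω) (hS : S.Nonempty) (hS_dist : ∀ ϖ ∈ S, ‖ϖ - ω‖ = δ)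
    (h_far : ∀ ϖ ∈ Ω, ϖ ≠ ω → ϖ ∉ S → δ < ‖ϖ - ω‖) :
    nearestNeighbours Ω ω = S := by
  have hS_ne : ∀ ϖ ∈ S, ϖ ≠ ω := fun ϖ hϖ h =>
    hδ.ne' (by rw [← hS_dist ϖ hϖ, h, sub_self, norm_zero])
  have h_min : ∀ ϖ ∈ Ω, ϖ ≠ ω → δ ≤ ‖ϖ - ω‖ := fun ϖ hϖ hne => by
    by_cases hϖS : ϖ ∈ S
    · exact (hS_dist ϖ hϖS).ge
    · exact (h_far ϖ hϖ hne hϖS).le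
  ext ϖ
  simp only [nearestNeighbours, Finset.mem_filter]
  constructor
  · rintro ⟨hϖ, hne, hle⟩
    obtain ⟨s, hs⟩ := hS
    by_contra hϖS
    have := hle s (hSΩ hs) (hS_ne s hs)
    linarith [h_far ϖ hϖ hne hϖS, hS_dist s hs]
  · intro hϖ
    exact ⟨hSΩ hϖ, hS_ne ϖ hϖ, fun ϖ' hϖ' hne' => hS_dist ϖ hϖ ▸ h_min ϖ' hϖ' hne'⟩

theorem Real.sin_lt_sin_of_lt_of_lt_pi_sub {a x : ℝ} (ha : 0 ≤ a) (hax : a < x)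
    (hxa : x < Real.pi - a) : Real.sin a < Real.sin x := by
  rcases le_or_gt x (Real.pi / 2) with hx | hx
  · exact Real.sin_lt_sin_of_lt_of_le_pi_div_two (by linarith [Real.pi_pos]) hx hax
  · rw [← Real.sin_pi_sub x]
    exact Real.sin_lt_sin_of_lt_of_le_pi_div_two (by linarith [Real.pi_pos]) (by linarith)
      (by linarith)

theorem sin_pi_div_two_mul_pos {K : ℕ} (hK : K ≠ 0) : 0 < Real.sin (Real.pi / (2 * K)) := by
  have : (1 : ℝ) ≤ K := by exact_mod_cast Nat.one_le_iff_ne_zero.2 hK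
  refine Real.sin_pos_of_pos_of_lt_pi (by positivity) ?_
  rw [div_lt_iff₀ (by positivity)]
  nlinarith [Real.pi_pos]

theorem IsPrimitiveRoot.mem_image_range_pow_iff {R : Type*} [CommRing R] [IsDomain R]
    [DecidableEq R] {ζ ξ : R} {n : ℕ} [NeZero n] (hζ : IsPrimitiveRoot ζ n) :
    ξ ∈ (Finset.range n).image (ζ ^ ·) ↔ ξ ^ n = 1 := by
  simp only [Finset.mem_image, Finset.mem_range]
  constructor
  · rintro ⟨i, -, rfl⟩
    rw [← pow_mul, mul_comm, pow_mul, hζ.pow_eq_one, one_pow]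
  · exact hζ.eq_pow_of_pow_eq_one

theorem IsPrimitiveRoot.exists_eq_mul_pow {F : Type*} [Field F] {ζ ω ξ : F}
    {n : ℕ} [NeZero n] (hζ : IsPrimitiveRoot ζ n) (hω : ω ^ n = 1) (hξ : ξ ^ n = 1) :
    ∃ m < n, ξ = ω * ζ ^ m := by
  have hω₀ : ω ≠ 0 := fun h => by simp [h, NeZero.ne n] at hω
  obtain ⟨m, hm, h⟩ := hζ.eq_pow_of_pow_eq_one (ξ := ξ / ω) (by rw [div_pow, hω, hξ, div_one])
  exact ⟨m, hm, by rw [h]; field_simp⟩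

noncomputable def polygonRoot (K : ℕ) : ℂ := exp (Real.pi * I / K)

section polygonRoot

variable {K : ℕ}

theorem polygonRoot_ne_zero : polygonRoot K ≠ 0 := exp_ne_zero _

theorem isPrimitiveRoot_polygonRoot (hK : K ≠ 0) : IsPrimitiveRoot (polygonRoot K) (2 * K) := by
  convert Complex.isPrimitiveRoot_exp (2 * K) (by positivity) using 2
  rw [polygonRoot]
  push_cast
  field_simp

theorem exp_pi_mul_I_mul_natCast_div (k : ℕ) :
    exp (Real.pi * I * k / K) = polygonRoot K ^ k := by
  rw [polygonRoot, ← exp_nat_mul]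
  ring_nf

theorem exp_neg_pi_mul_I_div : exp (-(Real.pi * I) / K) = (polygonRoot K)⁻¹ := by
  rw [polygonRoot, ← exp_neg, neg_div]

theorem norm_polygonRoot : ‖polygonRoot K‖ = 1 := by
  rw [polygonRoot, show (Real.pi : ℂ) * I / K = ((Real.pi / K : ℝ) : ℂ) * I by push_cast; ring,
    norm_exp_ofReal_mul_I]

theorem norm_polygonRoot_pow_sub_one {m : ℕ} (hm : m ≤ 2 * K) :
    ‖polygonRoot K ^ m - 1‖ = 2 * Real.sin (Real.pi * m / (2 * K)) := by
  rw [← exp_pi_mul_I_mul_natCast_div,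
    show (Real.pi : ℂ) * I * m / K = I * ((Real.pi * m / K : ℝ) : ℂ) by push_cast; ring,
    norm_exp_I_mul_ofReal_sub_one, Real.norm_eq_abs, abs_of_nonneg]
  · ring_nf
  obtain rfl | hK := K.eq_zero_or_pos
  · simp
  refine mul_nonneg zero_le_two (Real.sin_nonneg_of_nonneg_of_le_pi (by positivity) ?_)
  rw [div_div, div_le_iff₀ (by positivity)]
  have : (m : ℝ) ≤ 2 * K := by exact_mod_cast hm
  nlinarith [Real.pi_pos]

theorem two_mul_sin_lt_norm_polygonRoot_pow_sub_one {m : ℕ} (hm₂ : 2 ≤ m) (hmK : m ≤ 2 * K - 2) :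
    2 * Real.sin (Real.pi / (2 * K)) < ‖polygonRoot K ^ m - 1‖ := by
  have hK : (0 : ℝ) < K := by norm_cast; omega
  have hm₂' : (2 : ℝ) ≤ m := by exact_mod_cast hm₂
  have hmK' : (m : ℝ) + 2 ≤ 2 * K := by norm_cast; omega
  rw [norm_polygonRoot_pow_sub_one (by omega)]
  refine mul_lt_mul_of_pos_left (Real.sin_lt_sin_of_lt_of_lt_pi_sub (by positivity) ?_ ?_) two_pos
  · gcongr
    nlinarith [Real.pi_pos]
  · rw [lt_sub_iff_add_lt, ← add_div, div_lt_iff₀ (by positivity)]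
    nlinarith [Real.pi_pos]

theorem polygonRoot_inv (hK : K ≠ 0) : (polygonRoot K)⁻¹ = polygonRoot K ^ (2 * K - 1) := by
  refine inv_eq_of_mul_eq_one_right ?_
  rw [← pow_succ', Nat.sub_add_cancel (by omega), (isPrimitiveRoot_polygonRoot hK).pow_eq_one]

theorem polygonRoot_ne_inv (hK : 2 ≤ K) : polygonRoot K ≠ (polygonRoot K)⁻¹ := by
  have hζ := isPrimitiveRoot_polygonRoot (K := K) (by omega)
  refine fun h => hζ.pow_ne_one_of_pos_of_lt two_ne_zero (by omega) ?_
  rw [sq]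
  nth_rw 2 [h]
  exact mul_inv_cancel₀ polygonRoot_ne_zero

theorem norm_polygonRoot_pow_mul_sub_pow (k : ℕ) (ξ : ℂ) :
    ‖polygonRoot K ^ k * ξ - polygonRoot K ^ k‖ = ‖ξ - 1‖ := by
  rw [← mul_sub_one, norm_mul, norm_pow, norm_polygonRoot, one_pow, one_mul]

theorem norm_polygonRoot_sub_one (hK : K ≠ 0) :
    ‖polygonRoot K - 1‖ = 2 * Real.sin (Real.pi / (2 * K)) := by
  simpa using norm_polygonRoot_pow_sub_one (K := K) (m := 1) (by omega)

theorem norm_polygonRoot_inv_sub_one : ‖(polygonRoot K)⁻¹ - 1‖ = ‖polygonRoot K - 1‖ := by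
  have h := norm_conj (polygonRoot K - 1)
  rwa [map_sub, map_one, ← inv_eq_conj norm_polygonRoot] at h

theorem norm_adjacent_sub_polygonRoot_pow (hK : K ≠ 0) (k : ℕ) :
    ∀ ϖ ∈ ({polygonRoot K ^ k * polygonRoot K, polygonRoot K ^ k * (polygonRoot K)⁻¹} : Finset ℂ),
      ‖ϖ - polygonRoot K ^ k‖ = 2 * Real.sin (Real.pi / (2 * K)) := by
  simp only [Finset.mem_insert, Finset.mem_singleton, forall_eq_or_imp, forall_eq,
    norm_polygonRoot_pow_mul_sub_pow, norm_polygonRoot_inv_sub_one, norm_polygonRoot_sub_one hK,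
    and_self]

theorem polygonRoot_add_inv (hK : K ≠ 0) :
    polygonRoot K + (polygonRoot K)⁻¹ = 2 - ((2 * Real.sin (Real.pi / (2 * K)) : ℝ) : ℂ) ^ 2 := by
  rw [← norm_polygonRoot_sub_one hK, ← mul_conj', map_sub, map_one, ← inv_eq_conj norm_polygonRoot,
    mul_sub_one, sub_mul, one_mul, mul_inv_cancel₀ polygonRoot_ne_zero]
  ring

theorem nearestNeighbours_polygon (hK : 2 ≤ K) (k : ℕ) :
    nearestNeighbours ((Finset.range (2 * K)).image (polygonRoot K ^ ·)) (polygonRoot K ^ k) =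
      {polygonRoot K ^ k * polygonRoot K, polygonRoot K ^ k * (polygonRoot K)⁻¹} := by
  set ζ := polygonRoot K
  have hζ : IsPrimitiveRoot ζ (2 * K) := isPrimitiveRoot_polygonRoot (by omega)
  have : NeZero (2 * K) := ⟨by omega⟩
  have h_root : (ζ ^ k) ^ (2 * K) = 1 := by rw [pow_right_comm, hζ.pow_eq_one, one_pow]
  refine nearestNeighbours_eq_of_forall_dist (δ := 2 * Real.sin (Real.pi / (2 * K))) ?_ ?_
    (Finset.insert_nonempty _ _) ?_ ?_
  · exact mul_pos two_pos (sin_pi_div_two_mul_pos (by omega))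
  · intro ξ hξ
    rw [hζ.mem_image_range_pow_iff]
    simp only [Finset.mem_insert, Finset.mem_singleton] at hξ
    rcases hξ with rfl | rfl <;>
      simp only [mul_pow, inv_pow, h_root, hζ.pow_eq_one, inv_one, mul_one]
  · exact norm_adjacent_sub_polygonRoot_pow (by omega) k
  · intro ϖ hϖ hne hnot
    obtain ⟨m, hm, rfl⟩ := hζ.exists_eq_mul_pow h_root (hζ.mem_image_range_pow_iff.1 hϖ)
    simp only [Finset.mem_insert, Finset.mem_singleton, not_or] at hnot
    obtain ⟨h_ne_one, h_ne_inv⟩ := hnot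
    rw [norm_polygonRoot_pow_mul_sub_pow]
    refine two_mul_sin_lt_norm_polygonRoot_pow_sub_one ?_ ?_
    · by_contra! h
      interval_cases m
      · exact hne (by rw [pow_zero, mul_one])
      · exact h_ne_one (by rw [pow_one])
    · by_contra! h
      have : m = 2 * K - 1 := by omega
      rw [this, ← polygonRoot_inv (by omega)] at h_ne_inv
      exact h_ne_inv rfl

theorem adjacent_signed_sum_eq (hK : K ≠ 0) (k : ℕ) {s : ℝ} (hs : s ^ 2 = 1) :
    (s : ℂ) * (((-s : ℝ) : ℂ) * ((polygonRoot K ^ k * polygonRoot K - polygonRoot K ^ k) /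
        ((2 * Real.sin (Real.pi / (2 * K)) : ℝ) : ℂ)) +
      ((-s : ℝ) : ℂ) * ((polygonRoot K ^ k * (polygonRoot K)⁻¹ - polygonRoot K ^ k) /
        ((2 * Real.sin (Real.pi / (2 * K)) : ℝ) : ℂ))) =
      ((2 * Real.sin (Real.pi / (2 * K)) : ℝ) : ℂ) * polygonRoot K ^ k := by
  have h_sum := polygonRoot_add_inv hK
  have hδ : ((2 * Real.sin (Real.pi / (2 * K)) : ℝ) : ℂ) ≠ 0 :=
    ofReal_ne_zero.2 (mul_pos two_pos (sin_pi_div_two_mul_pos hK)).ne'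
  have hs' : (s : ℂ) ^ 2 = 1 := by exact_mod_cast hs
  generalize ((2 * Real.sin (Real.pi / (2 * K)) : ℝ) : ℂ) = δ at h_sum hδ ⊢
  have hζ : polygonRoot K ≠ 0 := polygonRoot_ne_zero
  push_cast
  field_simp at h_sum ⊢
  linear_combination (2 * polygonRoot K - polygonRoot K ^ 2 - 1) * hs' - h_sum

end polygonRoot

/-- **The regular `2K`-gon with alternating signs satisfies the symmetry hypothesis of the
multi-soliton construction.** For `Ω = {e^{ikπ/K}} ⊂ ℂ` and `σ(e^{ikπ/K}) = (−1)^k`, the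
nearest neighbours of a vertex `ω` are exactly the two adjacent vertices `ω e^{±iπ/K}`, each
at distance `2 sin(π/(2K))`, and
`σ(ω) ∑_{ϖ ∈ Ω_ω} σ(ϖ) (ϖ−ω)/|ϖ−ω| = 2 sin(π/(2K)) ω`, i.e. the hypothesis holds with
`γ = 2 sin(π/|Ω|)`. -/
theorem polygon_alternating_symmetry (K : ℕ) (hK : 2 ≤ K)
    (Ω : Finset ℂ)
    (hΩ : Ω = (Finset.range (2 * K)).image
        (fun k : ℕ => Complex.exp (Real.pi * Complex.I * (k : ℂ) / (K : ℂ))))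
    (σ : ℂ → ℝ)
    (hσ : ∀ k : ℕ, σ (Complex.exp (Real.pi * Complex.I * (k : ℂ) / (K : ℂ))) = (-1 : ℝ) ^ k) :
    ∀ k : ℕ, k < 2 * K →
      nearestNeighbours Ω (Complex.exp (Real.pi * Complex.I * (k : ℂ) / (K : ℂ))) =
        ({Complex.exp (Real.pi * Complex.I * (k : ℂ) / (K : ℂ)) *
            Complex.exp (Real.pi * Complex.I / (K : ℂ)),
          Complex.exp (Real.pi * Complex.I * (k : ℂ) / (K : ℂ)) *
            Complex.exp (-(Real.pi * Complex.I) / (K : ℂ))} : Finset ℂ) ∧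
      (∀ ϖ ∈ nearestNeighbours Ω (Complex.exp (Real.pi * Complex.I * (k : ℂ) / (K : ℂ))),
        ‖ϖ - Complex.exp (Real.pi * Complex.I * (k : ℂ) / (K : ℂ))‖ =
          2 * Real.sin (Real.pi / (2 * K))) ∧
      (σ (Complex.exp (Real.pi * Complex.I * (k : ℂ) / (K : ℂ))) : ℂ) *
          (∑ ϖ ∈ nearestNeighbours Ω (Complex.exp (Real.pi * Complex.I * (k : ℂ) / (K : ℂ))),
            (σ ϖ : ℂ) *
              ((ϖ - Complex.exp (Real.pi * Complex.I * (k : ℂ) / (K : ℂ))) /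
                ((‖ϖ - Complex.exp (Real.pi * Complex.I * (k : ℂ) / (K : ℂ))‖ : ℝ) : ℂ))) =
        ((2 * Real.sin (Real.pi / (2 * K)) : ℝ) : ℂ) *
          Complex.exp (Real.pi * Complex.I * (k : ℂ) / (K : ℂ)) := by
  intro k _
  have hK₀ : K ≠ 0 := by omega
  have h_root : exp (Real.pi * I / K) = polygonRoot K := rfl
  simp only [exp_pi_mul_I_mul_natCast_div, exp_neg_pi_mul_I_div, h_root] at hΩ hσ ⊢
  subst hΩ
  have h_dist := norm_adjacent_sub_polygonRoot_pow hK₀ k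
  rw [nearestNeighbours_polygon hK k]
  refine ⟨rfl, h_dist, ?_⟩
  have hσ_next : σ (polygonRoot K ^ k * polygonRoot K) = -(-1) ^ k := by
    rw [← pow_succ, hσ, pow_succ, mul_neg_one]
  have hσ_prev : σ (polygonRoot K ^ k * (polygonRoot K)⁻¹) = -(-1) ^ k := by
    rw [polygonRoot_inv hK₀, ← pow_add, hσ, pow_add,
      Odd.neg_one_pow (n := 2 * K - 1) ⟨K - 1, by omega⟩, mul_neg_one]
  have h_ne := (mul_right_injective₀ (pow_ne_zero k (polygonRoot_ne_zero (K := K)))).ne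
    (polygonRoot_ne_inv hK)
  rw [Finset.sum_pair h_ne, h_dist _ (Finset.mem_insert_self _ _),
    h_dist _ (Finset.mem_insert_of_mem (Finset.mem_singleton_self _)), hσ_next, hσ_prev, hσ]
  exact adjacent_signed_sum_eq hK₀ k (by rw [← pow_mul, pow_mul', neg_one_sq, one_pow])
end

section
/- Let d ≥ 1, let G be a subgroup of the orthogonal group O_d(ℝ), and let Ω be a finite set. Call a family ξ = (ξ_ω)_{ω∈Ω} ∈ (ℝ^d)^Ω G-invariant if for every R ∈ G there is a map χ(R) : Ω → Ω with Rξ_ω = ξ_{χ(R)ω} for all ω ∈ Ω. Let M ⊂ (ℝ^d)^Ω be the set of G-invariant families with pairwise distinct entries. Then for every ξ ∈ M (for which the maps χ(R) are uniquely determined permutations of Ω and R ↦ χ(R) is a group homomorphism) there is an open neighbourhood U of ξ in (ℝ^d)^Ω such that M ∩ U = V ∩ U, where V is the linear subspace V = {ζ ∈ (ℝ^d)^Ω : Rζ_ω = ζ_{χ(R)ω} for all R ∈ G and ω ∈ Ω}. In particular M is a smooth embedded submanifold of (ℝ^d)^Ω. -/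
/-- **The set of symmetric configurations is locally a linear subspace (hence a smooth
submanifold).** Let `G` be a subgroup of the orthogonal group of `ℝ^d` and `Ω` a finite
index set. If `ξ = (ξ_ω)` has pairwise distinct entries and is `G`-invariant (for every
`R ∈ G` there is `χ(R) : Ω → Ω` with `Rξ_ω = ξ_{χ(R)ω}`), then near `ξ` the set `M` of
`G`-invariant families with distinct entries coincides with the linear subspace
`V = {ζ : Rζ_ω = ζ_{χ(R)ω} ∀ R ∈ G, ω ∈ Ω}`. -/
theorem symmetric_configurations_locally_linear (d : ℕ) (hd : 1 ≤ d) (Ω : Type*) [Fintype Ω]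
    (G : Subgroup (EuclideanSpace ℝ (Fin d) ≃ₗᵢ[ℝ] EuclideanSpace ℝ (Fin d)))
    (ξ : Ω → EuclideanSpace ℝ (Fin d))
    (hinj : Function.Injective ξ)
    (hinv : ∀ R ∈ G, ∃ χ : Ω → Ω, ∀ ω, R (ξ ω) = ξ (χ ω)) :
    ∃ χ : G → (Ω → Ω),
      (∀ R : G, ∀ ω,
        (R : EuclideanSpace ℝ (Fin d) ≃ₗᵢ[ℝ] EuclideanSpace ℝ (Fin d)) (ξ ω) = ξ (χ R ω)) ∧
      ∃ U : Set (Ω → EuclideanSpace ℝ (Fin d)), IsOpen U ∧ ξ ∈ U ∧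
        {ζ : Ω → EuclideanSpace ℝ (Fin d) | Function.Injective ζ ∧
            ∀ R ∈ G, ∃ χ' : Ω → Ω, ∀ ω, R (ζ ω) = ζ (χ' ω)} ∩ U =
        {ζ : Ω → EuclideanSpace ℝ (Fin d) | ∀ R : G, ∀ ω,
            (R : EuclideanSpace ℝ (Fin d) ≃ₗᵢ[ℝ] EuclideanSpace ℝ (Fin d)) (ζ ω) =
              ζ (χ R ω)} ∩ U := by
  classical
  -- choose χ
  choose χ hχ using fun R : G => hinv R R.2
  refine ⟨χ, hχ, ?_⟩
  -- a positive separation ε between distinct entries of ξ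
  obtain ⟨ε, hε, hsep⟩ : ∃ ε > 0, ∀ ω ω', ω ≠ ω' → ε ≤ dist (ξ ω) (ξ ω') := by
    rcases (Finset.univ : Finset Ω).offDiag.eq_empty_or_nonempty with h | h
    · refine ⟨1, one_pos, fun ω ω' hωω' => ?_⟩
      have hm : ((ω, ω') : Ω × Ω) ∈ (Finset.univ : Finset Ω).offDiag :=
        Finset.mem_offDiag.mpr ⟨Finset.mem_univ _, Finset.mem_univ _, hωω'⟩
      rw [h] at hm
      exact absurd hm (Finset.notMem_empty _)
    · refine ⟨(Finset.univ : Finset Ω).offDiag.inf' h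
        (fun p => dist (ξ p.1) (ξ p.2)), ?_, ?_⟩
      · rw [gt_iff_lt, Finset.lt_inf'_iff]
        intro p hp
        have : p.1 ≠ p.2 := (Finset.mem_offDiag.mp hp).2.2
        exact dist_pos.mpr fun he => this (hinj he)
      · intro ω ω' hωω'
        have hm : ((ω, ω') : Ω × Ω) ∈ (Finset.univ : Finset Ω).offDiag :=
          Finset.mem_offDiag.mpr ⟨Finset.mem_univ _, Finset.mem_univ _, hωω'⟩
        exact Finset.inf'_le (fun p : Ω × Ω => dist (ξ p.1) (ξ p.2)) hm
  refine ⟨Set.univ.pi (fun ω => Metric.ball (ξ ω) (ε / 3)), ?_, ?_, ?_⟩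
  · exact isOpen_set_pi Set.finite_univ (fun ω _ => Metric.isOpen_ball)
  · intro ω _
    simpa using by positivity
  · ext ζ
    have hUmem : ζ ∈ Set.univ.pi (fun ω => Metric.ball (ξ ω) (ε / 3)) ↔
        ∀ ω, dist (ζ ω) (ξ ω) < ε / 3 := by
      simp [Set.mem_pi, Metric.mem_ball]
    constructor
    · rintro ⟨⟨hζinj, hζinv⟩, hU⟩
      refine ⟨fun R ω => ?_, hU⟩
      obtain ⟨χ', hχ'⟩ := hζinv R R.2
      have hd1 : dist (ξ (χ' ω)) (ζ (χ' ω)) < ε / 3 := by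
        rw [dist_comm]; exact hUmem.mp hU _
      have hd2 : dist (ζ (χ' ω)) (ξ (χ R ω)) < ε / 3 := by
        rw [← hχ' ω, ← hχ R ω, (R : EuclideanSpace ℝ (Fin d) ≃ₗᵢ[ℝ]
          EuclideanSpace ℝ (Fin d)).dist_map]
        exact hUmem.mp hU ω
      have heq : χ' ω = χ R ω := by
        by_contra hne
        have h1 := hsep _ _ hne
        have h2 : dist (ξ (χ' ω)) (ξ (χ R ω)) < 2 * (ε / 3) :=
          lt_of_le_of_lt (dist_triangle _ (ζ (χ' ω)) _) (by linarith)
        linarith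
      rw [← heq]
      exact hχ' ω
    · rintro ⟨hV, hU⟩
      refine ⟨⟨?_, ?_⟩, hU⟩
      · intro ω ω' he
        by_contra hne
        have h1 := hsep _ _ hne
        have h2 : dist (ξ ω) (ξ ω') < 2 * (ε / 3) := by
          have := hUmem.mp hU ω
          have := hUmem.mp hU ω'
          calc dist (ξ ω) (ξ ω') ≤ dist (ξ ω) (ζ ω) + dist (ζ ω) (ξ ω') := dist_triangle _ _ _
          _ = dist (ξ ω) (ζ ω) + dist (ζ ω') (ξ ω') := by rw [he]
          _ < 2 * (ε / 3) := by rw [dist_comm (ξ ω)]; linarith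
        linarith
      · intro R hR
        exact ⟨χ ⟨R, hR⟩, hV ⟨R, hR⟩⟩
end

section
/- Let d ≥ 1 and 0 < m' < m. There exists a constant C > 0 such that for every z ∈ ℝ^d, ∫_{ℝ^d} e^{−m|y|} e^{−m'|y+z|} dy ≤ C e^{−m'|z|}. -/
open MeasureTheory Real

private lemma integrable_exp_neg_norm (d : ℕ) {ε : ℝ} (hε : 0 < ε) :
    Integrable (fun y : EuclideanSpace ℝ (Fin d) => Real.exp (-ε * ‖y‖)) := by
  set n : ℕ := d + 1
  have hnr : (Module.finrank ℝ (EuclideanSpace ℝ (Fin d)) : ℝ) < (n : ℝ) := by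
    simp [n, finrank_euclideanSpace]
  have hint := integrable_one_add_norm (E := EuclideanSpace ℝ (Fin d)) (μ := volume) hnr
  set K : ℝ := (Nat.factorial n : ℝ) * Real.exp ε / ε ^ n with hK
  refine (hint.const_mul K).mono'
    ((Real.continuous_exp.comp (continuous_const.mul continuous_norm)).aestronglyMeasurable) ?_
  filter_upwards with y
  have hy : (0 : ℝ) ≤ ‖y‖ := norm_nonneg y
  rw [Real.norm_eq_abs, abs_of_nonneg (Real.exp_nonneg _)]
  have key : (ε * (1 + ‖y‖)) ^ n / (Nat.factorial n) ≤ Real.exp (ε * (1 + ‖y‖)) :=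
    Real.pow_div_factorial_le_exp _ (by positivity) n
  rw [mul_pow, div_le_iff₀ (by positivity), show ε * (1 + ‖y‖) = ε + ε * ‖y‖ by ring,
    Real.exp_add] at key
  have h1 : (1 + ‖y‖) ^ n ≤ K * Real.exp (ε * ‖y‖) := by
    rw [hK, div_mul_eq_mul_div, le_div_iff₀ (by positivity)]
    calc (1 + ‖y‖) ^ n * ε ^ n = ε ^ n * (1 + ‖y‖) ^ n := mul_comm _ _
      _ ≤ Real.exp ε * Real.exp (ε * ‖y‖) * (Nat.factorial n) := key
      _ = (Nat.factorial n : ℝ) * Real.exp ε * Real.exp (ε * ‖y‖) := by ring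
  have h2 : (1 + ‖y‖) ^ (-(n : ℝ)) = ((1 + ‖y‖) ^ n)⁻¹ := by
    rw [← Real.rpow_natCast (1 + ‖y‖) n, ← Real.rpow_neg (by positivity)]
  have hKpos : 0 < K := by positivity
  have hA : (0 : ℝ) < (1 + ‖y‖) ^ n := by positivity
  have : (1 : ℝ) / Real.exp (ε * ‖y‖) ≤ K / (1 + ‖y‖) ^ n := by
    rw [div_le_div_iff₀ (Real.exp_pos _) hA, one_mul]
    calc (1 + ‖y‖) ^ n ≤ K * Real.exp (ε * ‖y‖) := h1
      _ = K * Real.exp (ε * ‖y‖) := rfl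
  calc Real.exp (-ε * ‖y‖) = 1 / Real.exp (ε * ‖y‖) := by
        rw [show -ε * ‖y‖ = -(ε * ‖y‖) by ring, Real.exp_neg, one_div]
    _ ≤ K / (1 + ‖y‖) ^ n := this
    _ = K * (1 + ‖y‖) ^ (-(n : ℝ)) := by rw [h2, div_eq_mul_inv]

/-- **Interaction estimate for exponentially decaying solitary waves.**
For `0 < m' < m` there is a constant `C > 0` such that for every `z ∈ ℝ^d`,
`∫ e^{-m|y|} e^{-m'|y+z|} dy ≤ C e^{-m'|z|}`. -/
theorem interaction_exp_bound (d : ℕ) (hd : 1 ≤ d) (m m' : ℝ)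
    (hm' : 0 < m') (hm : m' < m) :
    ∃ C > 0, ∀ z : EuclideanSpace ℝ (Fin d),
      (∫⁻ y : EuclideanSpace ℝ (Fin d),
          ENNReal.ofReal (Real.exp (-m * ‖y‖) * Real.exp (-m' * ‖y + z‖)))
        ≤ ENNReal.ofReal (C * Real.exp (-m' * ‖z‖)) := by
  have hε : (0 : ℝ) < m - m' := by linarith
  have hint := integrable_exp_neg_norm d hε
  set C₀ : ℝ := ∫ y : EuclideanSpace ℝ (Fin d), Real.exp (-(m - m') * ‖y‖)
  have hC₀ : 0 ≤ C₀ := integral_nonneg fun y => (Real.exp_nonneg _)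
  refine ⟨C₀ + 1, by linarith, fun z => ?_⟩
  have step1 : ∀ y : EuclideanSpace ℝ (Fin d),
      Real.exp (-m * ‖y‖) * Real.exp (-m' * ‖y + z‖)
        ≤ Real.exp (-(m - m') * ‖y‖) * Real.exp (-m' * ‖z‖) := by
    intro y
    have h1 : ‖z‖ - ‖y‖ ≤ ‖y + z‖ := by
      have := norm_sub_norm_le z (-y)
      simp only [norm_neg, sub_neg_eq_add] at this
      have e : z + y = y + z := add_comm z y
      rw [e] at this
      linarith
    have h2 : -m' * ‖y + z‖ ≤ -m' * (‖z‖ - ‖y‖) := by nlinarith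
    calc Real.exp (-m * ‖y‖) * Real.exp (-m' * ‖y + z‖)
        ≤ Real.exp (-m * ‖y‖) * Real.exp (-m' * (‖z‖ - ‖y‖)) := by
          exact mul_le_mul_of_nonneg_left (Real.exp_le_exp.2 h2) (Real.exp_nonneg _)
      _ = Real.exp (-(m - m') * ‖y‖) * Real.exp (-m' * ‖z‖) := by
          rw [← Real.exp_add, ← Real.exp_add]; ring_nf
  calc (∫⁻ y : EuclideanSpace ℝ (Fin d),
          ENNReal.ofReal (Real.exp (-m * ‖y‖) * Real.exp (-m' * ‖y + z‖)))
      ≤ ∫⁻ y : EuclideanSpace ℝ (Fin d),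
          ENNReal.ofReal (Real.exp (-(m - m') * ‖y‖)) * ENNReal.ofReal (Real.exp (-m' * ‖z‖)) := by
        refine lintegral_mono fun y => ?_
        rw [← ENNReal.ofReal_mul (Real.exp_nonneg _)]
        exact ENNReal.ofReal_le_ofReal (step1 y)
    _ = (∫⁻ y : EuclideanSpace ℝ (Fin d),
          ENNReal.ofReal (Real.exp (-(m - m') * ‖y‖))) * ENNReal.ofReal (Real.exp (-m' * ‖z‖)) := by
        rw [lintegral_mul_const'']
        fun_prop
    _ = ENNReal.ofReal C₀ * ENNReal.ofReal (Real.exp (-m' * ‖z‖)) := by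
        rw [← ofReal_integral_eq_lintegral_ofReal hint
          (Filter.Eventually.of_forall fun y => Real.exp_nonneg _)]
    _ ≤ ENNReal.ofReal ((C₀ + 1) * Real.exp (-m' * ‖z‖)) := by
        rw [ENNReal.ofReal_mul (by linarith)]
        exact mul_le_mul_left (ENNReal.ofReal_le_ofReal (by linarith)) _
end

section
/- Let d ≥ 1 and m > 0. There exists a constant C > 0 such that for every z ∈ ℝ^d, ∫_{ℝ^d} (1+|y−z|)^{−(d−1)/2} e^{−|y−z|} (1+|y|)^{−(d−1)(1+m)/2} e^{−(1+m)|y|} dy ≤ C (1+|z|)^{−(d−1)/2} e^{−|z|}. -/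
open MeasureTheory Real

lemma exp_decay_finite_aux (d : ℕ) (m : ℝ) (hm : 0 < m) :
    (∫⁻ y : EuclideanSpace ℝ (Fin d), ENNReal.ofReal (Real.exp (-(m * ‖y‖)))) < ⊤ := by
  set n : ℕ := d + 1 with hn
  set K : ℝ := (1 + m⁻¹) ^ n * (n.factorial) * Real.exp 1 with hK
  have hKpos : 0 < K := by positivity
  have key : ∀ t : ℝ, 0 ≤ t → Real.exp (-(m * t)) ≤ K * (1 + t) ^ (-(n : ℝ)) := by
    intro t ht
    have h1t : (0:ℝ) < 1 + t := by linarith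
    have hmt : 0 ≤ m * t := mul_nonneg hm.le ht
    have h1 : (1 + t) ≤ (1 + m⁻¹) * (1 + m * t) := by
      have hinv : 0 < m⁻¹ := inv_pos.mpr hm
      have hexp : (1 + m⁻¹) * (1 + m * t) = 1 + t + m * t + m⁻¹ := by
        field_simp
        ring
      nlinarith
    have h2 : (1 + t) ^ n ≤ ((1 + m⁻¹) * (1 + m * t)) ^ n :=
      pow_le_pow_left₀ (by linarith) h1 n
    have h3 : (1 + m * t) ^ n ≤ (n.factorial) * Real.exp (1 + m * t) := by
      have := Real.pow_div_factorial_le_exp (x := 1 + m * t) (by linarith) n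
      have hf : (0:ℝ) < (n.factorial : ℝ) := by positivity
      calc (1 + m * t) ^ n = (1 + m * t) ^ n / (n.factorial) * (n.factorial) := by
            field_simp
        _ ≤ Real.exp (1 + m * t) * (n.factorial) := by
            apply mul_le_mul_of_nonneg_right this hf.le
        _ = (n.factorial) * Real.exp (1 + m * t) := by ring
    have h4 : (1 + t) ^ n ≤ K * Real.exp (m * t) := by
      calc (1 + t) ^ n ≤ ((1 + m⁻¹) * (1 + m * t)) ^ n := h2
        _ = (1 + m⁻¹) ^ n * (1 + m * t) ^ n := by rw [mul_pow]
        _ ≤ (1 + m⁻¹) ^ n * ((n.factorial) * Real.exp (1 + m * t)) := by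
            apply mul_le_mul_of_nonneg_left h3 (by positivity)
        _ = K * Real.exp (m * t) := by
            rw [hK, Real.exp_add]
            ring
    have hrw : (1 + t) ^ (-(n : ℝ)) = ((1 + t) ^ n)⁻¹ := by
      rw [Real.rpow_neg h1t.le, Real.rpow_natCast]
    rw [hrw, ← div_eq_mul_inv, le_div_iff₀ (by positivity)]
    calc Real.exp (-(m * t)) * (1 + t) ^ n
        ≤ Real.exp (-(m * t)) * (K * Real.exp (m * t)) := by
          apply mul_le_mul_of_nonneg_left h4 (Real.exp_nonneg _)
      _ = K * (Real.exp (-(m * t)) * Real.exp (m * t)) := by ring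
      _ = K := by rw [← Real.exp_add]; simp
  calc (∫⁻ y : EuclideanSpace ℝ (Fin d), ENNReal.ofReal (Real.exp (-(m * ‖y‖))))
      ≤ ∫⁻ y : EuclideanSpace ℝ (Fin d), ENNReal.ofReal (K * (1 + ‖y‖) ^ (-(n : ℝ))) :=
        lintegral_mono fun y => ENNReal.ofReal_le_ofReal (key ‖y‖ (norm_nonneg _))
    _ = ENNReal.ofReal K * ∫⁻ y : EuclideanSpace ℝ (Fin d),
          ENNReal.ofReal ((1 + ‖y‖) ^ (-(n : ℝ))) := by
        simp_rw [ENNReal.ofReal_mul hKpos.le]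
        rw [lintegral_const_mul' _ _ ENNReal.ofReal_ne_top]
    _ < ⊤ := by
        apply ENNReal.mul_lt_top ENNReal.ofReal_lt_top
        apply finite_integral_one_add_norm
        rw [finrank_euclideanSpace_fin]
        exact_mod_cast Nat.lt_succ_self d

/-- **Sharp interaction bound.** For `d ≥ 1` and `m > 0` there is `C > 0` such that for all
`z ∈ ℝ^d`,
`∫ (1+|y−z|)^{−(d−1)/2} e^{−|y−z|} (1+|y|)^{−(d−1)(1+m)/2} e^{−(1+m)|y|} dy
  ≤ C (1+|z|)^{−(d−1)/2} e^{−|z|}`. -/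
theorem sharp_interaction_bound (d : ℕ) (hd : 1 ≤ d) (m : ℝ) (hm : 0 < m) :
    ∃ C > 0, ∀ z : EuclideanSpace ℝ (Fin d),
      (∫⁻ y : EuclideanSpace ℝ (Fin d),
          ENNReal.ofReal
            ((1 + ‖y - z‖) ^ (-((d : ℝ) - 1) / 2) * Real.exp (-‖y - z‖) *
              ((1 + ‖y‖) ^ (-((d : ℝ) - 1) * (1 + m) / 2) * Real.exp (-(1 + m) * ‖y‖))))
        ≤ ENNReal.ofReal (C * (1 + ‖z‖) ^ (-((d : ℝ) - 1) / 2) * Real.exp (-‖z‖)) := by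
  set a : ℝ := ((d : ℝ) - 1) / 2 with ha
  have ha0 : 0 ≤ a := by
    have : (1:ℝ) ≤ (d:ℝ) := by exact_mod_cast hd
    rw [ha]; linarith
  set I : ENNReal := ∫⁻ y : EuclideanSpace ℝ (Fin d), ENNReal.ofReal (Real.exp (-(m * ‖y‖)))
    with hI
  have hIfin : I < ⊤ := exp_decay_finite_aux d m hm
  refine ⟨I.toReal + 1, by positivity, fun z => ?_⟩
  have hwz : (0:ℝ) < 1 + ‖z‖ := by have := norm_nonneg z; linarith
  -- pointwise bound
  have pointwise : ∀ y : EuclideanSpace ℝ (Fin d),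
      (1 + ‖y - z‖) ^ (-((d : ℝ) - 1) / 2) * Real.exp (-‖y - z‖) *
        ((1 + ‖y‖) ^ (-((d : ℝ) - 1) * (1 + m) / 2) * Real.exp (-(1 + m) * ‖y‖))
      ≤ ((1 + ‖z‖) ^ (-a) * Real.exp (-‖z‖)) * Real.exp (-(m * ‖y‖)) := by
    intro y
    set u := ‖y - z‖ with hu
    set v := ‖y‖ with hv
    set w := ‖z‖ with hw
    have hu0 : 0 ≤ u := norm_nonneg _
    have hv0 : 0 ≤ v := norm_nonneg _
    have hw0 : 0 ≤ w := norm_nonneg _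
    have htri : w ≤ u + v := by
      have h : ‖z‖ ≤ ‖y - z‖ + ‖y‖ := by
        calc ‖z‖ = ‖y - (y - z)‖ := by congr 1; abel
          _ ≤ ‖y‖ + ‖y - z‖ := norm_sub_le _ _
          _ = ‖y - z‖ + ‖y‖ := by ring
      simpa [hu, hv, hw] using h
    have h1u : (0:ℝ) < 1 + u := by linarith
    have h1v : (0:ℝ) < 1 + v := by linarith
    have h1w : (0:ℝ) < 1 + w := by linarith
    have hexp1 : -((d : ℝ) - 1) / 2 = -a := by rw [ha]; ring
    have hexp2 : -((d : ℝ) - 1) * (1 + m) / 2 = -a + -(a * m) := by rw [ha]; ring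
    have hsplit : (1 + v) ^ (-((d : ℝ) - 1) * (1 + m) / 2)
        = (1 + v) ^ (-a) * (1 + v) ^ (-(a * m)) := by
      rw [hexp2, Real.rpow_add h1v]
    have hP : (1 + u) ^ (-a) * (1 + v) ^ (-a) ≤ (1 + w) ^ (-a) := by
      have hprod : 1 + w ≤ (1 + u) * (1 + v) := by nlinarith
      calc (1 + u) ^ (-a) * (1 + v) ^ (-a) = ((1 + u) * (1 + v)) ^ (-a) :=
            (Real.mul_rpow h1u.le h1v.le).symm
        _ ≤ (1 + w) ^ (-a) :=
            Real.rpow_le_rpow_of_nonpos h1w hprod (by linarith)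
    have hQ : (1 + v) ^ (-(a * m)) ≤ 1 :=
      Real.rpow_le_one_of_one_le_of_nonpos (by linarith) (by nlinarith)
    have hE : Real.exp (-u) * Real.exp (-(1 + m) * v)
        ≤ Real.exp (-w) * Real.exp (-(m * v)) := by
      rw [← Real.exp_add, ← Real.exp_add]
      apply Real.exp_le_exp.mpr
      linarith
    have hQ0 : 0 ≤ (1 + v) ^ (-(a * m)) := Real.rpow_nonneg h1v.le _
    have hP0 : 0 ≤ (1 + u) ^ (-a) * (1 + v) ^ (-a) :=
      mul_nonneg (Real.rpow_nonneg h1u.le _) (Real.rpow_nonneg h1v.le _)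
    calc (1 + u) ^ (-((d : ℝ) - 1) / 2) * Real.exp (-u) *
          ((1 + v) ^ (-((d : ℝ) - 1) * (1 + m) / 2) * Real.exp (-(1 + m) * v))
        = ((1 + u) ^ (-a) * (1 + v) ^ (-a)) * (1 + v) ^ (-(a * m)) *
            (Real.exp (-u) * Real.exp (-(1 + m) * v)) := by
          rw [hexp1, hsplit]; ring
      _ ≤ ((1 + w) ^ (-a) * 1) * (Real.exp (-w) * Real.exp (-(m * v))) := by
          apply mul_le_mul _ hE (by positivity) (by positivity)
          exact mul_le_mul hP hQ hQ0 (Real.rpow_nonneg h1w.le _)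
      _ = ((1 + w) ^ (-a) * Real.exp (-w)) * Real.exp (-(m * v)) := by ring
  have hA0 : 0 ≤ (1 + ‖z‖) ^ (-a) * Real.exp (-‖z‖) :=
    mul_nonneg (Real.rpow_nonneg hwz.le _) (Real.exp_nonneg _)
  calc (∫⁻ y : EuclideanSpace ℝ (Fin d),
          ENNReal.ofReal
            ((1 + ‖y - z‖) ^ (-((d : ℝ) - 1) / 2) * Real.exp (-‖y - z‖) *
              ((1 + ‖y‖) ^ (-((d : ℝ) - 1) * (1 + m) / 2) * Real.exp (-(1 + m) * ‖y‖))))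
      ≤ ∫⁻ y : EuclideanSpace ℝ (Fin d),
          ENNReal.ofReal (((1 + ‖z‖) ^ (-a) * Real.exp (-‖z‖)) * Real.exp (-(m * ‖y‖))) :=
        lintegral_mono fun y => ENNReal.ofReal_le_ofReal (pointwise y)
    _ = ENNReal.ofReal ((1 + ‖z‖) ^ (-a) * Real.exp (-‖z‖)) * I := by
        simp_rw [ENNReal.ofReal_mul hA0]
        rw [lintegral_const_mul' _ _ ENNReal.ofReal_ne_top, hI]
    _ ≤ ENNReal.ofReal ((1 + ‖z‖) ^ (-a) * Real.exp (-‖z‖)) * ENNReal.ofReal (I.toReal + 1) := by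
        apply mul_le_mul_right
        calc I = ENNReal.ofReal I.toReal := (ENNReal.ofReal_toReal hIfin.ne).symm
          _ ≤ ENNReal.ofReal (I.toReal + 1) := ENNReal.ofReal_le_ofReal (by linarith)
    _ = ENNReal.ofReal ((I.toReal + 1) * (1 + ‖z‖) ^ (-((d : ℝ) - 1) / 2) * Real.exp (-‖z‖)) := by
        rw [← ENNReal.ofReal_mul hA0]
        congr 1
        rw [ha]
        ring_nf
end

section
/- Let d ≥ 1 and p > 1, and let Q : ℝ^d → (0,∞) be a continuous radially symmetric function, Q(x) = q(|x|), such that for some constants κ > 0 and C₀ > 0 one has q(r) ≤ C₀ e^{−r} for all r ≥ 0 and |q(r) − κ r^{−(d−1)/2} e^{−r}| ≤ C₀ r^{−(d+1)/2} e^{−r} for all r ≥ 1. Then there exists C > 0 such that for every z ∈ ℝ^d with |z| ≥ 2, |∫_{ℝ^d} Q(x)^p Q(x−z) dx − I·q(|z|)| ≤ C |z|^{−1} q(|z|), where I = ∫_{ℝ^d} Q(x)^p e^{−x₁} dx (x₁ being the first coordinate of x). -/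
/-!
Write `R = ‖z‖` and `a = (d - 1)/2`. For `2‖x‖ ≤ R` the expansion
`‖x - z‖ = R - ⟪x, z⟫/R + O(‖x‖²/R)` and the asymptotics of `q` give
`q ‖x - z‖ = q R · e^{⟪x, z⟫/R} + O(R^{-a-1} e^{-R} · e^{‖x‖} (1 + ‖x‖)²)`, while for `2‖x‖ > R`
the bound `q ≤ C₀ e^{-r}` alone gives an error of the same shape with `(1 + ‖x‖)^{a+1}`.
Since `Q^p ≤ C₀^p e^{-p‖x‖}` with `p > 1`, the weight `e^{‖x‖}(1 + ‖x‖)^{a+2}` is integrable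
against `Q^p`, so the remainder is `O(R^{-1} · R^{-a} e^{-R}) = O(R^{-1} q R)`, using that `q` is
bounded below by a multiple of `R^{-a} e^{-R}` (continuity and positivity on compacts, the
asymptotics near infinity). Rotation invariance turns `∫ Q^p e^{⟪x, z⟫/R}` into `I`.
-/

open MeasureTheory Real Set
open scoped RealInnerProductSpace

namespace SolitonInteraction

noncomputable def profile (a r : ℝ) : ℝ := r ^ (-a) * exp (-r)

lemma profile_pos (a : ℝ) {r : ℝ} (hr : 0 < r) : 0 < profile a r := by
  unfold profile; positivity

lemma profile_add_one (a : ℝ) {r : ℝ} (hr : 0 < r) : profile (a + 1) r = r⁻¹ * profile a r := by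
  rw [profile, profile, neg_add, rpow_add hr, rpow_neg_one]; ring

lemma div_two_rpow_neg (a : ℝ) {R : ℝ} (hR : 0 ≤ R) : (R / 2) ^ (-a) = 2 ^ a * R ^ (-a) := by
  rw [div_eq_mul_inv, mul_rpow hR (by norm_num), inv_rpow (by norm_num),
    rpow_neg (by norm_num : (0 : ℝ) ≤ 2), inv_inv, mul_comm]

lemma rpow_neg_le_two_rpow_mul {a R s : ℝ} (ha : 0 ≤ a) (hR : 0 < R) (hs : R / 2 ≤ s) :
    s ^ (-a) ≤ 2 ^ a * R ^ (-a) :=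
  div_two_rpow_neg a hR.le ▸ rpow_le_rpow_of_nonpos (by positivity) hs (by linarith)

lemma profile_le_two_rpow_mul_profile_mul_exp {a R s t : ℝ} (ha : 0 ≤ a) (hR : 0 < R)
    (hs : R / 2 ≤ s) (hst : R - t ≤ s) :
    profile a s ≤ 2 ^ a * (profile a R * exp t) := by
  have hexp : exp (-s) ≤ exp (-R) * exp t := by rw [← exp_add]; gcongr; linarith
  calc profile a s ≤ (2 ^ a * R ^ (-a)) * (exp (-R) * exp t) :=
        mul_le_mul (rpow_neg_le_two_rpow_mul ha hR hs) hexp (by positivity) (by positivity)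
    _ = 2 ^ a * (profile a R * exp t) := by rw [profile]; ring

lemma exp_neg_sub_exp_neg_le (u v : ℝ) :
    exp (-u) - exp (-v) ≤ exp (-u) * (v - u) := by
  have h := add_one_le_exp (u - v)
  calc exp (-u) - exp (-v) = exp (-u) * (1 - exp (u - v)) := by
        rw [mul_sub, mul_one, ← exp_add]; ring_nf
    _ ≤ exp (-u) * (v - u) := mul_le_mul_of_nonneg_left (by linarith) (exp_pos _).le

lemma abs_rpow_neg_sub_rpow_neg_le {a ρ u v : ℝ} (ha : 0 ≤ a) (hρ : 0 < ρ)
    (hu : ρ ≤ u) (hv : ρ ≤ v) :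
    |u ^ (-a) - v ^ (-a)| ≤ a * ρ ^ (-a - 1) * |u - v| := by
  have hderiv : ∀ x ∈ Ici ρ,
      HasDerivWithinAt (fun r ↦ r ^ (-a)) (-a * x ^ (-a - 1)) (Ici ρ) x := fun x hx ↦
    (hasDerivAt_rpow_const (Or.inl (hρ.trans_le hx).ne')).hasDerivWithinAt
  have hbound : ∀ x ∈ Ici ρ, ‖-a * x ^ (-a - 1)‖ ≤ a * ρ ^ (-a - 1) := fun x hx ↦ by
    rw [norm_mul, norm_neg, norm_of_nonneg ha, norm_of_nonneg (rpow_nonneg (hρ.le.trans hx) _)]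
    exact mul_le_mul_of_nonneg_left (rpow_le_rpow_of_nonpos hρ hx (by linarith)) ha
  simpa [abs_sub_comm] using
    (convex_Ici ρ).norm_image_sub_le_of_norm_hasDerivWithin_le hderiv hbound hv hu

lemma abs_profile_sub_profile_mul_exp_le {a R s t A : ℝ} (ha : 0 ≤ a) (hR : 0 < R)
    (htR : 2 * t ≤ R) (hsR : |s - R| ≤ t) (hAt : A ≤ t) (hAs : R - A ≤ s)
    (hsA : s ≤ R - A + t ^ 2 / R) :
    |profile a s - profile a R * exp A| ≤
      2 ^ (a + 1) * (t ^ 2 + a * t) * (profile (a + 1) R * exp t) := by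
  have ht : 0 ≤ t := (abs_nonneg _).trans hsR
  have hs : R / 2 ≤ s := by linarith [(abs_le.mp hsR).1]
  have hRA : exp (-(R - A)) = exp (-R) * exp A := by rw [← exp_add]; ring_nf
  have hexpA : exp (-(R - A)) ≤ exp (-R) * exp t := by rw [hRA]; gcongr
  have hsplit : profile a s - profile a R * exp A =
      s ^ (-a) * (exp (-s) - exp (-(R - A))) + (s ^ (-a) - R ^ (-a)) * exp (-(R - A)) := by
    rw [hRA, profile, profile]; ring
  have hfirst : |s ^ (-a) * (exp (-s) - exp (-(R - A)))| ≤
      2 ^ a * t ^ 2 * (profile (a + 1) R * exp t) := by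
    have hdiff : 0 ≤ exp (-(R - A)) - exp (-s) := sub_nonneg.mpr (exp_le_exp.mpr (by linarith))
    rw [abs_mul, abs_of_nonneg (rpow_nonneg (by linarith) _), abs_sub_comm, abs_of_nonneg hdiff]
    calc s ^ (-a) * (exp (-(R - A)) - exp (-s))
        ≤ (2 ^ a * R ^ (-a)) * ((exp (-R) * exp t) * (t ^ 2 / R)) := by
          refine mul_le_mul (rpow_neg_le_two_rpow_mul ha hR hs) ?_ hdiff (by positivity)
          refine (exp_neg_sub_exp_neg_le _ _).trans ?_
          gcongr; linarith
      _ = 2 ^ a * t ^ 2 * (profile (a + 1) R * exp t) := by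
          rw [profile_add_one a hR, profile]; field_simp
  have hsecond : |(s ^ (-a) - R ^ (-a)) * exp (-(R - A))| ≤
      2 ^ (a + 1) * (a * t) * (profile (a + 1) R * exp t) := by
    rw [abs_mul, abs_of_pos (exp_pos _)]
    calc |s ^ (-a) - R ^ (-a)| * exp (-(R - A))
        ≤ (a * (R / 2) ^ (-a - 1) * t) * (exp (-R) * exp t) := by
          gcongr
          exact (abs_rpow_neg_sub_rpow_neg_le ha (by positivity) hs (by linarith)).trans
            (by gcongr)
      _ = 2 ^ (a + 1) * (a * t) * (profile (a + 1) R * exp t) := by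
          rw [show -a - 1 = -(a + 1) by ring, div_two_rpow_neg _ hR.le, profile]; ring
  have h2a : (2 : ℝ) ^ a ≤ 2 ^ (a + 1) := rpow_le_rpow_of_exponent_le one_le_two (by linarith)
  calc |profile a s - profile a R * exp A|
      ≤ 2 ^ a * t ^ 2 * (profile (a + 1) R * exp t) +
          2 ^ (a + 1) * (a * t) * (profile (a + 1) R * exp t) := by
        rw [hsplit]; exact (abs_add_le _ _).trans (add_le_add hfirst hsecond)
    _ ≤ 2 ^ (a + 1) * (t ^ 2 + a * t) * (profile (a + 1) R * exp t) := by
        have := (profile_pos (a + 1) hR).le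
        have : 0 ≤ t ^ 2 * (profile (a + 1) R * exp t) := by positivity
        nlinarith

section Profile

variable {q : ℝ → ℝ} {a κ C₀ : ℝ}

lemma abs_sub_mul_exp_le_of_two_mul_le (ha : 0 ≤ a) (hκ : 0 ≤ κ) (hC₀ : 0 ≤ C₀)
    (hq : ∀ r, 1 ≤ r → |q r - κ * profile a r| ≤ C₀ * profile (a + 1) r)
    {R s t A : ℝ} (hR : 2 ≤ R) (htR : 2 * t ≤ R) (hsR : |s - R| ≤ t) (hAt : A ≤ t)
    (hAs : R - A ≤ s) (hsA : s ≤ R - A + t ^ 2 / R) :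
    |q s - q R * exp A| ≤
      2 ^ (a + 1) * (2 * C₀ + κ * (1 + a)) * (1 + t) ^ 2 * (profile (a + 1) R * exp t) := by
  have hR0 : 0 < R := by linarith
  have ht : 0 ≤ t := (abs_nonneg _).trans hsR
  have hs : R / 2 ≤ s := by linarith [(abs_le.mp hsR).1]
  set P := profile (a + 1) R * exp t
  have hP : 0 ≤ P := by have := profile_pos (a + 1) hR0; positivity
  have h_s : |q s - κ * profile a s| ≤ C₀ * (2 ^ (a + 1) * P) :=
    (hq s (by linarith)).trans <| mul_le_mul_of_nonneg_left
      (profile_le_two_rpow_mul_profile_mul_exp (by linarith) hR0 hs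
        (by linarith [(abs_le.mp hsR).1])) hC₀
  have h_model : |κ * (profile a s - profile a R * exp A)| ≤
      κ * (2 ^ (a + 1) * (t ^ 2 + a * t) * P) := by
    rw [abs_mul, abs_of_nonneg hκ]
    exact mul_le_mul_of_nonneg_left
      (abs_profile_sub_profile_mul_exp_le ha hR0 htR hsR hAt hAs hsA) hκ
  have h_R : |(κ * profile a R - q R) * exp A| ≤ C₀ * P := by
    rw [abs_mul, abs_of_pos (exp_pos _), abs_sub_comm, ← mul_assoc]
    exact mul_le_mul (hq R (by linarith)) (exp_le_exp.mpr hAt) (exp_pos _).le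
      (by have := profile_pos (a + 1) hR0; positivity)
  have hsplit : q s - q R * exp A = (q s - κ * profile a s) +
      κ * (profile a s - profile a R * exp A) + (κ * profile a R - q R) * exp A := by ring
  have h2 : (1 : ℝ) ≤ 2 ^ (a + 1) := one_le_rpow one_le_two (by linarith)
  have hpoly : t ^ 2 + a * t ≤ (1 + a) * (1 + t) ^ 2 := by nlinarith
  calc |q s - q R * exp A|
      ≤ C₀ * (2 ^ (a + 1) * P) + κ * (2 ^ (a + 1) * (t ^ 2 + a * t) * P) + C₀ * P := by
        rw [hsplit]
        exact (abs_add_three _ _ _).trans (add_le_add (add_le_add h_s h_model) h_R)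
    _ ≤ 2 ^ (a + 1) * (2 * C₀ + κ * (1 + a)) * (1 + t) ^ 2 * P := by
        have h1t : 1 ≤ (1 + t) ^ 2 := one_le_pow₀ (by linarith)
        have : C₀ * P ≤ C₀ * (2 ^ (a + 1) * P) := by
          gcongr; exact le_mul_of_one_le_left hP h2
        have : 2 * C₀ * (2 ^ (a + 1) * P) ≤ 2 * C₀ * (2 ^ (a + 1) * P) * (1 + t) ^ 2 :=
          le_mul_of_one_le_right (by positivity) h1t
        have : κ * (2 ^ (a + 1) * (t ^ 2 + a * t) * P) ≤
            κ * (2 ^ (a + 1) * ((1 + a) * (1 + t) ^ 2) * P) := by gcongr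
        linarith

lemma abs_sub_mul_exp_le_of_le_two_mul {b : ℝ} (hb : 0 ≤ b) (hC₀ : 0 ≤ C₀)
    (hq0 : ∀ r, 0 ≤ r → 0 ≤ q r) (hq : ∀ r, 0 ≤ r → q r ≤ C₀ * exp (-r))
    {R s t A : ℝ} (hR : 0 < R) (hRt : R ≤ 2 * t) (hs : 0 ≤ s) (hst : R - t ≤ s) (hAt : A ≤ t) :
    |q s - q R * exp A| ≤ 2 ^ b * C₀ * (1 + t) ^ b * (profile b R * exp t) := by
  have hR' : exp (-R) = R ^ b * profile b R := by
    rw [profile, ← mul_assoc, ← rpow_add hR, add_neg_cancel, rpow_zero, one_mul]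
  have hRb : R ^ b ≤ 2 ^ b * (1 + t) ^ b := by
    rw [← mul_rpow zero_le_two (by linarith)]
    exact rpow_le_rpow hR.le (by linarith) hb
  have hbound : C₀ * (exp (-R) * exp t) ≤ 2 ^ b * C₀ * (1 + t) ^ b * (profile b R * exp t) := by
    rw [hR']
    have := profile_pos b hR
    have := mul_le_mul_of_nonneg_right hRb (by positivity : 0 ≤ C₀ * (profile b R * exp t))
    linarith
  refine (abs_sub_le_of_nonneg_of_le (hq0 s hs) ?_ (mul_nonneg (hq0 R hR.le) (exp_pos _).le) ?_)
  · calc q s ≤ C₀ * exp (-s) := hq s hs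
      _ ≤ C₀ * (exp (-R) * exp t) := by rw [← exp_add]; gcongr; linarith
      _ ≤ _ := hbound
  · calc q R * exp A ≤ C₀ * exp (-R) * exp t :=
          mul_le_mul (hq R hR.le) (exp_le_exp.mpr hAt) (exp_pos _).le
            (mul_nonneg hC₀ (exp_pos _).le)
      _ ≤ _ := by rw [mul_assoc]; exact hbound

lemma exists_pos_mul_profile_le (hκ : 0 < κ)
    (hq : ∀ r, 1 ≤ r → |q r - κ * profile a r| ≤ C₀ * profile (a + 1) r)
    (hqc : ContinuousOn q (Ici 2)) (hqpos : ∀ r, 2 ≤ r → 0 < q r) :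
    ∃ c > 0, ∀ r, 2 ≤ r → c * profile a r ≤ q r := by
  set R₀ := max 2 (2 * C₀ / κ)
  have hratio : ContinuousOn (fun r ↦ q r / profile a r) (Icc 2 R₀) := by
    refine (hqc.mono Icc_subset_Ici_self).div ?_ fun r hr ↦
      (profile_pos a (by linarith [hr.1])).ne'
    exact (continuousOn_id.rpow_const fun r hr ↦ Or.inl (by linarith [hr.1] : (0 : ℝ) < r).ne').mul
      (by fun_prop)
  obtain ⟨r₀, hr₀, hmin⟩ := isCompact_Icc.exists_isMinOn ⟨2, le_rfl, le_max_left _ _⟩ hratio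
  have hm : 0 < q r₀ / profile a r₀ :=
    div_pos (hqpos r₀ hr₀.1) (profile_pos a (by linarith [hr₀.1]))
  refine ⟨min (κ / 2) (q r₀ / profile a r₀), lt_min (by positivity) hm, fun r hr ↦ ?_⟩
  have hw := profile_pos a (by linarith : (0 : ℝ) < r)
  rcases le_or_gt r R₀ with hsmall | hlarge
  · calc min (κ / 2) (q r₀ / profile a r₀) * profile a r ≤ q r / profile a r * profile a r :=
          mul_le_mul_of_nonneg_right ((min_le_right _ _).trans (hmin ⟨hr, hsmall⟩)) hw.le
      _ = q r := div_mul_cancel₀ _ hw.ne'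
  · have hC : C₀ / r ≤ κ / 2 := by
      rw [div_le_iff₀ (by linarith)]
      have := (le_max_right _ _).trans hlarge.le
      rw [div_le_iff₀ hκ] at this
      linarith
    have := (abs_le.mp (hq r (by linarith))).1
    rw [profile_add_one a (by linarith)] at this
    calc min (κ / 2) (q r₀ / profile a r₀) * profile a r ≤ (κ - C₀ / r) * profile a r := by
          gcongr; exact (min_le_left _ _).trans (by linarith)
      _ ≤ q r := by rw [div_eq_mul_inv]; linarith

end Profile

section InnerProductSpace

variable {E : Type*} [NormedAddCommGroup E] [InnerProductSpace ℝ E]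

lemma inner_div_norm_le_norm (x z : E) : ⟪x, z⟫ / ‖z‖ ≤ ‖x‖ :=
  div_le_of_le_mul₀ (norm_nonneg z) (norm_nonneg x) (real_inner_le_norm x z)

lemma norm_sub_inner_div_norm_le_norm_sub (x z : E) : ‖z‖ - ⟪x, z⟫ / ‖z‖ ≤ ‖x - z‖ := by
  rcases eq_or_ne z 0 with rfl | hz
  · simp
  have hR : 0 < ‖z‖ := norm_pos_iff.mpr hz
  have hsq : ‖x - z‖ ^ 2 = (‖z‖ - ⟪x, z⟫ / ‖z‖) ^ 2 + (‖x‖ ^ 2 - (⟪x, z⟫ / ‖z‖) ^ 2) := by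
    rw [norm_sub_sq_real]; field_simp; ring
  have hA : (⟪x, z⟫ / ‖z‖) ^ 2 ≤ ‖x‖ ^ 2 := by
    rw [div_pow, div_le_iff₀ (by positivity), ← mul_pow, ← sq_abs]
    gcongr; exact abs_real_inner_le_norm x z
  exact abs_le_of_sq_le_sq' (by nlinarith) (norm_nonneg _) |>.2

lemma norm_sub_le_norm_sub_inner_div_norm_add {x z : E} (hxz : 2 * ‖x‖ ≤ ‖z‖) :
    ‖x - z‖ ≤ ‖z‖ - ⟪x, z⟫ / ‖z‖ + ‖x‖ ^ 2 / ‖z‖ := by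
  rcases eq_or_ne z 0 with rfl | hz
  · have : x = 0 := norm_le_zero_iff.mp (by rw [norm_zero] at hxz; linarith)
    simp [this]
  have hR : 0 < ‖z‖ := norm_pos_iff.mpr hz
  set A := ⟪x, z⟫ / ‖z‖
  have hlow := norm_sub_inner_div_norm_le_norm_sub x z
  have hAt := inner_div_norm_le_norm x z
  have hsq : ‖x - z‖ ^ 2 = (‖z‖ - A) ^ 2 + (‖x‖ ^ 2 - A ^ 2) := by
    rw [norm_sub_sq_real]; simp only [A]; field_simp; ring
  have hst : ‖z‖ - ‖x‖ ≤ ‖x - z‖ := by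
    simpa [norm_sub_rev] using norm_sub_norm_le z x
  -- `(‖x - z‖ - (‖z‖ - A)) (‖x - z‖ + (‖z‖ - A)) = ‖x‖² - A²`, and the second factor is `≥ ‖z‖`
  rw [← sub_le_iff_le_add', le_div_iff₀ hR]
  nlinarith [sq_nonneg A]

variable {q : ℝ → ℝ} {a κ C₀ : ℝ}

lemma abs_sub_mul_exp_inner_le (ha : 0 ≤ a) (hκ : 0 ≤ κ) (hC₀ : 0 ≤ C₀)
    (hq0 : ∀ r, 0 ≤ r → 0 ≤ q r) (hq1 : ∀ r, 0 ≤ r → q r ≤ C₀ * exp (-r))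
    (hq2 : ∀ r, 1 ≤ r → |q r - κ * profile a r| ≤ C₀ * profile (a + 1) r)
    (x : E) {z : E} (hz : 2 ≤ ‖z‖) :
    |q ‖x - z‖ - q ‖z‖ * exp (⟪x, z⟫ / ‖z‖)| ≤
      2 ^ (a + 1) * (2 * C₀ + κ * (1 + a)) * profile (a + 1) ‖z‖ *
        (exp ‖x‖ * (1 + ‖x‖) ^ (a + 2)) := by
  have hR : 0 < ‖z‖ := by linarith
  have hsR : |‖x - z‖ - ‖z‖| ≤ ‖x‖ := by
    simpa using abs_norm_sub_norm_le (x - z) (-z)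
  have hAt := inner_div_norm_le_norm x z
  have h1t : 1 ≤ 1 + ‖x‖ := by linarith [norm_nonneg x]
  have hP := (profile_pos (a + 1) hR).le
  suffices h : |q ‖x - z‖ - q ‖z‖ * exp (⟪x, z⟫ / ‖z‖)| ≤
      2 ^ (a + 1) * (2 * C₀ + κ * (1 + a)) * (1 + ‖x‖) ^ (a + 2) *
        (profile (a + 1) ‖z‖ * exp ‖x‖) by linarith
  rcases le_or_gt (2 * ‖x‖) ‖z‖ with hinner | houter
  · refine (abs_sub_mul_exp_le_of_two_mul_le ha hκ hC₀ hq2 hz hinner hsR hAt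
      (norm_sub_inner_div_norm_le_norm_sub x z)
      (norm_sub_le_norm_sub_inner_div_norm_add hinner)).trans ?_
    gcongr
    rw [← rpow_two]
    exact rpow_le_rpow_of_exponent_le h1t (by linarith)
  · refine (abs_sub_mul_exp_le_of_le_two_mul (b := a + 1) (by linarith) hC₀ hq0 hq1 hR houter.le
      (norm_nonneg _) (by linarith [(abs_le.mp hsR).1]) hAt).trans ?_
    have : (1 + ‖x‖) ^ (a + 1) ≤ (1 + ‖x‖) ^ (a + 2) :=
      rpow_le_rpow_of_exponent_le h1t (by linarith)
    have : C₀ ≤ 2 * C₀ + κ * (1 + a) := by nlinarith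
    gcongr

end InnerProductSpace

lemma one_add_rpow_le_mul_exp (r : ℝ) {c : ℝ} (hc : 0 < c) :
    ∃ M, ∀ t, 0 ≤ t → (1 + t) ^ r ≤ M * exp (c * t) := by
  set m := ⌈r⌉₊
  refine ⟨m.factorial / c ^ m * exp c, fun t ht ↦ ?_⟩
  have h1t : 1 ≤ 1 + t := by linarith
  calc (1 + t) ^ r ≤ (1 + t) ^ (m : ℝ) := rpow_le_rpow_of_exponent_le h1t (Nat.le_ceil r)
    _ = (c * (1 + t)) ^ m / m.factorial * (m.factorial / c ^ m) := by
        rw [rpow_natCast, mul_pow]; field_simp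
    _ ≤ exp (c * (1 + t)) * (m.factorial / c ^ m) := by
        gcongr; exact pow_div_factorial_le_exp _ (by positivity) m
    _ = m.factorial / c ^ m * exp c * exp (c * t) := by rw [mul_add, mul_one, exp_add]; ring

section Integrability

variable {E : Type*} [NormedAddCommGroup E] [NormedSpace ℝ E] [FiniteDimensional ℝ E]
  [MeasurableSpace E] [BorelSpace E] {μ : Measure E} [μ.IsAddHaarMeasure]

lemma integrable_exp_neg_mul_norm_mul_one_add_norm_rpow {c : ℝ} (hc : 0 < c) (b : ℝ) :
    Integrable (fun x : E ↦ exp (-(c * ‖x‖)) * (1 + ‖x‖) ^ b) μ := by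
  set n : ℝ := (Module.finrank ℝ E : ℝ)
  obtain ⟨M, hM⟩ := one_add_rpow_le_mul_exp (b + (n + 1)) hc
  refine ((integrable_one_add_norm (μ := μ) (r := n + 1) (by linarith)).const_mul M).mono'
    (by fun_prop) (Filter.Eventually.of_forall fun x ↦ ?_)
  have h1x : 0 < 1 + ‖x‖ := by positivity
  rw [norm_of_nonneg (by positivity), rpow_neg h1x.le, ← div_eq_mul_inv,
    le_div_iff₀ (by positivity), mul_assoc, ← rpow_add h1x, exp_neg,
    inv_mul_le_iff₀ (exp_pos _)]
  exact (hM ‖x‖ (norm_nonneg x)).trans_eq (mul_comm _ _)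

variable {q : ℝ → ℝ} {p C₀ : ℝ}

lemma integrable_rpow_mul_exp_norm_mul (hp : 1 < p) (hC₀ : 0 ≤ C₀)
    (hq0 : ∀ r, 0 ≤ r → 0 ≤ q r) (hq1 : ∀ r, 0 ≤ r → q r ≤ C₀ * exp (-r))
    (hqc : ContinuousOn q (Ici 0)) (b : ℝ) :
    Integrable (fun x : E ↦ q ‖x‖ ^ p * (exp ‖x‖ * (1 + ‖x‖) ^ b)) μ := by
  have hqn : Continuous fun x : E ↦ q ‖x‖ :=
    hqc.comp_continuous continuous_norm fun x ↦ norm_nonneg x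
  refine ((integrable_exp_neg_mul_norm_mul_one_add_norm_rpow (sub_pos.mpr hp) b).const_mul
    (C₀ ^ p)).mono' ?_ (Filter.Eventually.of_forall fun x ↦ ?_)
  · exact ((hqn.measurable.pow_const p).mul (by fun_prop)).aestronglyMeasurable
  have hx := norm_nonneg x
  have hqp : q ‖x‖ ^ p ≤ C₀ ^ p * exp (-(p * ‖x‖)) := by
    calc q ‖x‖ ^ p ≤ (C₀ * exp (-‖x‖)) ^ p := rpow_le_rpow (hq0 _ hx) (hq1 _ hx) (by linarith)
      _ = C₀ ^ p * exp (-(p * ‖x‖)) := by rw [mul_rpow hC₀ (exp_pos _).le, ← exp_mul]; ring_nf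
  rw [norm_of_nonneg (by have := hq0 _ hx; positivity)]
  calc q ‖x‖ ^ p * (exp ‖x‖ * (1 + ‖x‖) ^ b)
      ≤ C₀ ^ p * exp (-(p * ‖x‖)) * (exp ‖x‖ * (1 + ‖x‖) ^ b) := by gcongr
    _ = C₀ ^ p * (exp (-((p - 1) * ‖x‖)) * (1 + ‖x‖) ^ b) := by
        rw [show -((p - 1) * ‖x‖) = -(p * ‖x‖) + ‖x‖ by ring, exp_add]; ring

end Integrability

section Interaction

variable {E : Type*} [NormedAddCommGroup E] [InnerProductSpace ℝ E] [FiniteDimensional ℝ E]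
  [MeasurableSpace E] [BorelSpace E] {μ : Measure E} [μ.IsAddHaarMeasure]
variable {q : ℝ → ℝ} {a p κ C₀ : ℝ}

lemma abs_integral_sub_integral_mul_le (ha : 0 ≤ a) (hp : 1 < p) (hκ : 0 ≤ κ) (hC₀ : 0 ≤ C₀)
    (hq0 : ∀ r, 0 ≤ r → 0 ≤ q r) (hq1 : ∀ r, 0 ≤ r → q r ≤ C₀ * exp (-r))
    (hq2 : ∀ r, 1 ≤ r → |q r - κ * profile a r| ≤ C₀ * profile (a + 1) r)
    (hqc : ContinuousOn q (Ici 0)) {z : E} (hz : 2 ≤ ‖z‖) :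
    |(∫ x, q ‖x‖ ^ p * q ‖x - z‖ ∂μ) - (∫ x, q ‖x‖ ^ p * exp (⟪x, z⟫ / ‖z‖) ∂μ) * q ‖z‖| ≤
      2 ^ (a + 1) * (2 * C₀ + κ * (1 + a)) * profile (a + 1) ‖z‖ *
        ∫ x, q ‖x‖ ^ p * (exp ‖x‖ * (1 + ‖x‖) ^ (a + 2)) ∂μ := by
  set K := 2 ^ (a + 1) * (2 * C₀ + κ * (1 + a)) * profile (a + 1) ‖z‖
  have hW := integrable_rpow_mul_exp_norm_mul (μ := μ) hp hC₀ hq0 hq1 hqc (a + 2)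
  have hqm : Measurable fun x : E ↦ q ‖x‖ :=
    (hqc.comp_continuous continuous_norm fun x ↦ norm_nonneg x).measurable
  have hqp : ∀ x : E, 0 ≤ q ‖x‖ ^ p := fun x ↦ rpow_nonneg (hq0 _ (norm_nonneg x)) p
  have hbound : ∀ x : E, ‖q ‖x‖ ^ p * q ‖x - z‖ - q ‖x‖ ^ p * exp (⟪x, z⟫ / ‖z‖) * q ‖z‖‖ ≤
      K * (q ‖x‖ ^ p * (exp ‖x‖ * (1 + ‖x‖) ^ (a + 2))) := fun x ↦ by
    rw [norm_eq_abs, mul_assoc, mul_comm (exp _), ← mul_sub, abs_mul, abs_of_nonneg (hqp x),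
      mul_left_comm]
    exact mul_le_mul_of_nonneg_left (abs_sub_mul_exp_inner_le ha hκ hC₀ hq0 hq1 hq2 x hz) (hqp x)
  have hexp : Integrable (fun x ↦ q ‖x‖ ^ p * exp (⟪x, z⟫ / ‖z‖)) μ := by
    refine hW.mono' ((hqm.pow_const p).mul (by fun_prop)).aestronglyMeasurable
      (Filter.Eventually.of_forall fun x ↦ ?_)
    rw [norm_of_nonneg (mul_nonneg (hqp x) (exp_pos _).le)]
    refine mul_le_mul_of_nonneg_left ?_ (hqp x)
    calc exp (⟪x, z⟫ / ‖z‖) ≤ exp ‖x‖ := exp_le_exp.mpr (inner_div_norm_le_norm x z)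
      _ ≤ exp ‖x‖ * (1 + ‖x‖) ^ (a + 2) :=
        le_mul_of_one_le_right (exp_pos _).le (one_le_rpow (by simp) (by linarith))
  have hdiff : Integrable
      (fun x ↦ q ‖x‖ ^ p * q ‖x - z‖ - q ‖x‖ ^ p * exp (⟪x, z⟫ / ‖z‖) * q ‖z‖) μ := by
    refine (hW.const_mul K).mono' ?_ (Filter.Eventually.of_forall hbound)
    have : Measurable fun x : E ↦ q ‖x - z‖ := hqm.comp (measurable_id.sub_const z)
    exact (((hqm.pow_const p).mul this).sub
      (((hqm.pow_const p).mul (by fun_prop)).mul_const _)).aestronglyMeasurable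
  have hinter : Integrable (fun x ↦ q ‖x‖ ^ p * q ‖x - z‖) μ :=
    (hdiff.add (hexp.mul_const _)).congr (.of_forall fun x ↦ sub_add_cancel _ _)
  rw [← integral_mul_const, ← integral_sub hinter (hexp.mul_const _), ← integral_const_mul]
  exact norm_integral_le_of_norm_le (hW.const_mul K) (Filter.Eventually.of_forall hbound)

lemma integral_comp_norm_inner_eq (G : ℝ → ℝ → ℝ) {e e' : E} (he : ‖e‖ = ‖e'‖) :
    ∫ x, G ‖x‖ ⟪x, e⟫ = ∫ x, G ‖x‖ ⟪x, e'⟫ := by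
  set T := (ℝ ∙ (e - e'))ᗮ.reflection
  have hTe : T e = e' := Submodule.reflection_sub he
  rw [← T.measurePreserving.integral_comp T.toHomeomorph.measurableEmbedding
    fun x ↦ G ‖x‖ ⟪x, e'⟫]
  congr 1 with x
  rw [T.norm_map, ← hTe, T.inner_map_map]

theorem abs_integral_sub_integral_mul_le_inv_mul (ha : 0 ≤ a) (hp : 1 < p) (hκ : 0 < κ)
    (hC₀ : 0 ≤ C₀) (hqpos : ∀ r, 0 ≤ r → 0 < q r) (hq1 : ∀ r, 0 ≤ r → q r ≤ C₀ * exp (-r))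
    (hq2 : ∀ r, 1 ≤ r → |q r - κ * profile a r| ≤ C₀ * profile (a + 1) r)
    (hqc : ContinuousOn q (Ici 0)) {e : E} (he : ‖e‖ = 1) :
    ∃ C > 0, ∀ z : E, 2 ≤ ‖z‖ →
      |(∫ x, q ‖x‖ ^ p * q ‖x - z‖) - (∫ x, q ‖x‖ ^ p * exp ⟪x, e⟫) * q ‖z‖| ≤
        C * ‖z‖⁻¹ * q ‖z‖ := by
  have hq0 : ∀ r, 0 ≤ r → 0 ≤ q r := fun r hr ↦ (hqpos r hr).le
  obtain ⟨c, hc, hlow⟩ := exists_pos_mul_profile_le hκ hq2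
    (hqc.mono (Ici_subset_Ici.mpr zero_le_two)) fun r hr ↦ hqpos r (by linarith)
  set K := 2 ^ (a + 1) * (2 * C₀ + κ * (1 + a))
  set J := ∫ x : E, q ‖x‖ ^ p * (exp ‖x‖ * (1 + ‖x‖) ^ (a + 2))
  have hJ : 0 ≤ J := integral_nonneg fun x ↦
    mul_nonneg (rpow_nonneg (hq0 _ (norm_nonneg x)) p) (by positivity)
  refine ⟨K * J / c + 1, by positivity, fun z hz ↦ ?_⟩
  have hR : 0 < ‖z‖ := by linarith
  have hrot : ∫ x, q ‖x‖ ^ p * exp ⟪x, e⟫ = ∫ x, q ‖x‖ ^ p * exp (⟪x, z⟫ / ‖z‖) := by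
    simp_rw [div_eq_inv_mul, ← real_inner_smul_right]
    exact integral_comp_norm_inner_eq (fun r s ↦ q r ^ p * exp s)
      (by rw [he, norm_smul, norm_inv, norm_norm, inv_mul_cancel₀ hR.ne'])
  rw [hrot]
  refine (abs_integral_sub_integral_mul_le ha hp hκ.le hC₀ hq0 hq1 hq2 hqc hz).trans ?_
  rw [profile_add_one a hR]
  have hq := hlow ‖z‖ hz
  calc K * (‖z‖⁻¹ * profile a ‖z‖) * J = K * J / c * ‖z‖⁻¹ * (c * profile a ‖z‖) := by
        field_simp
    _ ≤ (K * J / c + 1) * ‖z‖⁻¹ * q ‖z‖ := by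
        have := (profile_pos a hR).le
        gcongr
        linarith

end Interaction

end SolitonInteraction

/-- **Asymptotics of the leading soliton interaction.** Let `Q(x) = q(|x|) > 0` be continuous
and radial with `q(r) ≤ C₀e^{−r}` and `|q(r) − κ r^{−(d−1)/2}e^{−r}| ≤ C₀ r^{−(d+1)/2}e^{−r}`
for `r ≥ 1`. Then there is `C > 0` such that for `|z| ≥ 2`,
`|∫ Q^p Q(·−z) − I q(|z|)| ≤ C |z|⁻¹ q(|z|)` with `I = ∫ Q(x)^p e^{−x₁} dx`. -/
theorem soliton_interaction_asymptotics (d : ℕ) (hd : 1 ≤ d) (p : ℝ) (hp : 1 < p)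
    (Q : EuclideanSpace ℝ (Fin d) → ℝ) (q : ℝ → ℝ) (κ C₀ : ℝ)
    (hκ : 0 < κ) (hC₀ : 0 < C₀)
    (hQpos : ∀ x, 0 < Q x) (hQcont : Continuous Q)
    (hQrad : ∀ x, Q x = q ‖x‖)
    (hq1 : ∀ r : ℝ, 0 ≤ r → q r ≤ C₀ * Real.exp (-r))
    (hq2 : ∀ r : ℝ, 1 ≤ r →
      |q r - κ * r ^ (-((d : ℝ) - 1) / 2) * Real.exp (-r)| ≤
        C₀ * r ^ (-((d : ℝ) + 1) / 2) * Real.exp (-r)) :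
    ∃ C > 0, ∀ z : EuclideanSpace ℝ (Fin d), 2 ≤ ‖z‖ →
      |(∫ x, Q x ^ p * Q (x - z)) -
          (∫ x : EuclideanSpace ℝ (Fin d), Q x ^ p * Real.exp (-(x ⟨0, hd⟩))) * q ‖z‖| ≤
        C * ‖z‖⁻¹ * q ‖z‖ := by
  have ha : 0 ≤ ((d : ℝ) - 1) / 2 := by
    have : (1 : ℝ) ≤ d := by exact_mod_cast hd
    linarith
  have hprofile : ∀ r, 1 ≤ r → |q r - κ * SolitonInteraction.profile (((d : ℝ) - 1) / 2) r| ≤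
      C₀ * SolitonInteraction.profile (((d : ℝ) - 1) / 2 + 1) r := fun r hr ↦ by
    rw [SolitonInteraction.profile, SolitonInteraction.profile, ← mul_assoc, ← mul_assoc,
      ← neg_div, show -(((d : ℝ) - 1) / 2 + 1) = -((d : ℝ) + 1) / 2 by ring]
    exact hq2 r hr
  obtain rfl : Q = fun x ↦ q ‖x‖ := funext hQrad
  set u : EuclideanSpace ℝ (Fin d) := EuclideanSpace.single ⟨0, hd⟩ 1
  have hq_eq : ∀ r, 0 ≤ r → q ‖r • u‖ = q r := fun r hr ↦ by simp [u, norm_smul, abs_of_nonneg hr]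
  have hqc : ContinuousOn q (Set.Ici 0) :=
    (hQcont.comp (continuous_id.smul continuous_const)).continuousOn.congr
      fun r hr ↦ (hq_eq r hr).symm
  obtain ⟨C, hC, hbound⟩ := SolitonInteraction.abs_integral_sub_integral_mul_le_inv_mul ha hp hκ
    hC₀.le (fun r hr ↦ hq_eq r hr ▸ hQpos _) hq1 hprofile hqc (e := -u) (by simp [u])
  refine ⟨C, hC, fun z hz ↦ ?_⟩
  have hcoord : ∀ x : EuclideanSpace ℝ (Fin d), -(x ⟨0, hd⟩) = ⟪x, -u⟫ := fun x ↦ by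
    simp [u, EuclideanSpace.inner_single_right]
  simpa only [hcoord] using hbound z hz
end

section
/- Let β ≥ 0, c₀ ∈ ℝ, C > 0 and T ≥ 3. Let r : [T,∞) → (0,∞) be a C¹ function with r(t) → ∞ as t → ∞ such that r'(t) = r(t)^{−β} e^{−r(t)+c₀} (1 + h(t)) for all t ≥ T, where |h(t)| ≤ C/ln t. Then r(t) = ln t − β ln ln t + c₀ + O(ln ln t / ln t) as t → ∞. -/
open Real Filter Set

/-!
Compare `r` with the barriers `b±(t) = ln t - β ln ln t + c₀ ± K ln ln t / ln t`. Since
`x ↦ x^{-β} e^{-x+c₀}` is decreasing, for `K` large and `t` large `b₊` is a strict supersolution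
and `b₋` a strict subsolution of the perturbed ODE, with margin `2 ln ln t / (t ln t)`, the
derivative of `(ln ln t)²`. If `r` stayed above `b₊` forever, `r - b₊ + (ln ln t)²` would be
decreasing, which is absurd as `r - b₊ > 0` and `(ln ln t)² → ∞`; so `r` eventually drops below
`b₊`, and the strict inequality at contact keeps it there. Symmetrically for `b₋`.
-/

theorem exp_neg_le_one_sub_half {x : ℝ} (h0 : 0 ≤ x) (h1 : x ≤ 1) : exp (-x) ≤ 1 - x / 2 := by
  have hmul : exp (-x) * exp x = 1 := by rw [← exp_add, neg_add_cancel, exp_zero]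
  nlinarith [add_one_le_exp x, exp_pos (-x)]

theorem log_div_le_of_sub_le {L u D : ℝ} (hL : 0 < L) (hu : L / 2 ≤ u) (hD : 0 ≤ D)
    (hLu : L - u ≤ D) : log (L / u) ≤ 2 * D / L := by
  have hu0 : 0 < u := by linarith
  calc log (L / u) ≤ L / u - 1 := log_le_sub_one_of_pos (div_pos hL hu0)
    _ = (L - u) / u := by field_simp
    _ ≤ D / u := by gcongr
    _ ≤ D / (L / 2) := by gcongr
    _ = 2 * D / L := by field_simp

theorem tendsto_log_log_atTop : Tendsto (fun t => log (log t)) atTop atTop :=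
  tendsto_log_atTop.comp tendsto_log_atTop

theorem eventually_mul_log_log_le_log (c : ℝ) : ∀ᶠ t in atTop, c * log (log t) ≤ log t := by
  have hc : 0 < 1 / (|c| + 1) := by positivity
  filter_upwards [(isLittleO_log_id_atTop.comp_tendsto tendsto_log_atTop).def hc,
    tendsto_log_atTop.eventually_ge_atTop 0] with t ht hL
  simp only [Function.comp_apply, id, norm_eq_abs, abs_of_nonneg hL] at ht
  calc c * log (log t) ≤ |c| * |log (log t)| := (le_abs_self _).trans (abs_mul _ _).le
    _ ≤ |c| * (1 / (|c| + 1) * log t) := by gcongr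
    _ ≤ log t := by
      rw [← mul_assoc, mul_one_div]
      exact mul_le_of_le_one_left hL ((div_le_one (by positivity)).2 (by linarith))

theorem hasDerivAt_log_log_sq {t : ℝ} (ht : 1 < t) :
    HasDerivAt (fun s => log (log s) ^ 2) (2 * log (log t) / (t * log t)) t := by
  have hL : 0 < log t := log_pos ht
  refine (((hasDerivAt_log (by positivity)).log hL.ne').fun_pow 2).congr_deriv ?_
  field_simp
  norm_num

theorem eventually_nonpos_of_hasDerivAt_le_neg {φ φ' ψ ψ' : ℝ → ℝ}
    (hφ : ∀ᶠ t in atTop, HasDerivAt φ (φ' t) t) (hψ : ∀ᶠ t in atTop, HasDerivAt ψ (ψ' t) t)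
    (hψ'_pos : ∀ᶠ t in atTop, 0 < ψ' t) (hψ_top : Tendsto ψ atTop atTop)
    (hφ' : ∀ᶠ t in atTop, 0 ≤ φ t → φ' t ≤ -ψ' t) : ∀ᶠ t in atTop, φ t ≤ 0 := by
  obtain ⟨a, ha⟩ := eventually_atTop.1 (hφ.and (hψ.and (hψ'_pos.and hφ')))
  obtain ⟨t₀, ht₀a, hφt₀⟩ : ∃ t₀ ≥ a, φ t₀ ≤ 0 := by
    by_contra! hφ_pos
    have hanti : AntitoneOn (fun t => φ t + ψ t) (Ici a) := by
      refine antitoneOn_of_hasDerivWithinAt_nonpos (f' := fun t => φ' t + ψ' t) (convex_Ici a)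
        (fun t ht => ((ha t ht).1.add (ha t ht).2.1).continuousAt.continuousWithinAt) ?_ ?_
      all_goals rw [interior_Ici]; intro t ht
      · exact ((ha t ht.le).1.add (ha t ht.le).2.1).hasDerivWithinAt
      · linarith [(ha t ht.le).2.2.2 (hφ_pos t ht.le).le]
    obtain ⟨t, hψt, hta⟩ :=
      ((hψ_top.eventually_gt_atTop (φ a + ψ a)).and (eventually_ge_atTop a)).exists
    have := hanti self_mem_Ici hta hta
    linarith [hφ_pos t hta]
  refine eventually_atTop.2 ⟨t₀, fun t ht => ?_⟩
  refine image_le_of_deriv_right_lt_deriv_boundary (f' := φ') (B' := fun _ => 0)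
    (fun x hx => (ha x (ht₀a.trans hx.1)).1.continuousAt.continuousWithinAt)
    (fun x hx => (ha x (ht₀a.trans hx.1)).1.hasDerivWithinAt) hφt₀
    (fun _ => hasDerivAt_const _ (0 : ℝ)) (fun x hx hx0 => ?_) ⟨ht, le_rfl⟩
  have hx := ha x (ht₀a.trans hx.1)
  linarith [hx.2.2.2 hx0.ge, hx.2.2.1]

theorem eventually_nonpos_of_hasDerivAt_le_neg_log_log {φ φ' : ℝ → ℝ}
    (hφ : ∀ᶠ t in atTop, HasDerivAt φ (φ' t) t)
    (hφ' : ∀ᶠ t in atTop, 0 ≤ φ t → φ' t ≤ -(2 * log (log t) / (t * log t))) :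
    ∀ᶠ t in atTop, φ t ≤ 0 := by
  refine eventually_nonpos_of_hasDerivAt_le_neg hφ ?_ ?_
    ((tendsto_pow_atTop two_ne_zero).comp tendsto_log_log_atTop) hφ'
  · filter_upwards [eventually_gt_atTop 1] with t ht using hasDerivAt_log_log_sq ht
  · filter_upwards [eventually_gt_atTop 1, tendsto_log_log_atTop.eventually_ge_atTop 1]
      with t ht hM
    have := log_pos ht
    positivity

noncomputable def modulationRate (β c₀ x : ℝ) : ℝ := x ^ (-β) * exp (-x + c₀)

theorem modulationRate_nonneg (β c₀ : ℝ) {x : ℝ} (hx : 0 ≤ x) : 0 ≤ modulationRate β c₀ x :=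
  mul_nonneg (rpow_nonneg hx _) (exp_pos _).le

theorem modulationRate_antitoneOn {β : ℝ} (hβ : 0 ≤ β) (c₀ : ℝ) :
    AntitoneOn (modulationRate β c₀) (Ioi 0) := fun x hx _ _ hxy =>
  mul_le_mul (rpow_le_rpow_of_nonpos hx hxy (neg_nonpos.2 hβ)) (exp_le_exp.2 (by linarith))
    (exp_pos _).le (rpow_nonneg (le_of_lt hx) _)

noncomputable def barrier (β c₀ k t : ℝ) : ℝ :=
  log t - β * log (log t) + c₀ + k * (log (log t) / log t)

theorem hasDerivAt_barrier (β c₀ k : ℝ) {t : ℝ} (ht : 1 < t) :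
    HasDerivAt (barrier β c₀ k) ((1 - β / log t + k * (1 - log (log t)) / log t ^ 2) / t) t := by
  have hL : 0 < log t := log_pos ht
  have hlog : HasDerivAt log t⁻¹ t := hasDerivAt_log (by positivity)
  have hloglog := hlog.log hL.ne'
  refine ((((hlog.sub (hloglog.const_mul β)).add_const c₀).add
    ((hloglog.div hlog hL.ne').const_mul k))).congr_deriv ?_
  field_simp

theorem eventually_pos_barrier (β c₀ k : ℝ) : ∀ᶠ t in atTop, 0 < barrier β c₀ k t := by
  filter_upwards [eventually_gt_atTop 1,
    tendsto_log_log_atTop.eventually_ge_atTop 1,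
    eventually_mul_log_log_le_log (|β| + |c₀| + |k| + 1)] with t ht hM hML
  have hL : 0 < log t := log_pos ht
  have hM0 : 0 ≤ log (log t) := by linarith
  have hkm : |k * (log (log t) / log t)| ≤ |k| := by
    rw [abs_mul, abs_of_nonneg (div_nonneg hM0 hL.le)]
    refine mul_le_of_le_one_right (abs_nonneg k) ((div_le_one hL).2 ?_)
    nlinarith [abs_nonneg β, abs_nonneg c₀, abs_nonneg k]
  have hβM := mul_le_mul_of_nonneg_right (le_abs_self β) hM0
  have hc₀M := le_mul_of_one_le_right (abs_nonneg c₀) hM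
  have hkM := le_mul_of_one_le_right (abs_nonneg k) hM
  unfold barrier
  nlinarith [neg_abs_le c₀, neg_abs_le (k * (log (log t) / log t))]

theorem mul_modulationRate_barrier (β c₀ k : ℝ) {t : ℝ} (ht : 1 < t)
    (hu : 0 < barrier β c₀ k t) :
    t * modulationRate β c₀ (barrier β c₀ k t) =
      exp (β * log (log t / barrier β c₀ k t) - k * (log (log t) / log t)) := by
  have hL : 0 < log t := log_pos ht
  rw [modulationRate, rpow_def_of_pos hu, log_div hL.ne' hu.ne', ← exp_log (by linarith : 0 < t),
    ← exp_add, ← exp_add, exp_log (by linarith : 0 < t)]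
  congr 1
  unfold barrier
  ring

theorem abs_mul_one_sub_div_sq_le {K L M : ℝ} (hK : 0 ≤ K) (hL : 0 < L) (hM : 1 ≤ M)
    (hKM : K * M ≤ L) : |K * (1 - M) / L ^ 2| ≤ M / L := by
  rw [abs_div, abs_mul, abs_of_nonneg hK, abs_of_nonpos (by linarith), abs_of_pos (by positivity),
    div_le_div_iff₀ (by positivity) hL]
  nlinarith

theorem exp_log_div_sub_mul_le {β c₀ C K L M : ℝ} (hβ : 0 ≤ β) (hC : 0 ≤ C)
    (hK : 2 * β * (β + |c₀|) + C + 2 * β + 6 ≤ K) (hM : 1 ≤ M)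
    (hML : (K + 2 * (β + |c₀|)) * M ≤ L) :
    exp (β * log (L / (L - β * M + c₀ + K * (M / L))) - K * (M / L)) * (1 + C / L) + 2 * (M / L)
      ≤ 1 - β / L + K * (1 - M) / L ^ 2 := by
  set m := M / L
  set A := 2 * β * (β + |c₀|)
  have hA : 0 ≤ A := by positivity
  have hM0 : 0 < M := by linarith
  have hc₀M := le_mul_of_one_le_right (abs_nonneg c₀) hM
  have hKM : K * M ≤ L := by linarith [mul_nonneg (by positivity : 0 ≤ 2 * (β + |c₀|)) hM0.le]
  have hL : 0 < L := by nlinarith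
  have hm : 0 < m := div_pos hM0 hL
  have hLm : 1 / L ≤ m := div_le_div_of_nonneg_right hM hL.le
  have hKm0 : 0 ≤ K * m := mul_nonneg (by linarith) hm.le
  have hKm : K * m ≤ 1 := by rw [mul_div_assoc', div_le_one hL]; exact hKM
  have hu : L / 2 ≤ L - β * M + c₀ + K * m := by nlinarith [neg_abs_le c₀]
  have hlog : β * log (L / (L - β * M + c₀ + K * m)) ≤ A * m := by
    have h := log_div_le_of_sub_le hL hu (D := β * M + |c₀|) (by positivity)
      (by linarith [neg_abs_le c₀])
    calc β * log (L / (L - β * M + c₀ + K * m)) ≤ β * (2 * (β * M + |c₀|) / L) := by gcongr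
      _ ≤ β * (2 * (β * M + |c₀| * M) / L) := by gcongr
      _ = A * m := by ring
  have hx0 : 0 ≤ (K - A - C) * m := mul_nonneg (by linarith) hm.le
  have hx1 : (K - A - C) * m ≤ 1 := by nlinarith
  have hCm : 1 + C / L ≤ exp (C * m) := by
    have : C * (1 / L) ≤ C * m := by gcongr
    linarith [add_one_le_exp (C * m), mul_one_div C L]
  have hprod : exp (β * log (L / (L - β * M + c₀ + K * m)) - K * m) * (1 + C / L)
      ≤ 1 - (K - A - C) * m / 2 :=
    calc _ ≤ exp (A * m - K * m) * exp (C * m) :=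
          mul_le_mul (exp_le_exp.2 (by linarith)) hCm (by positivity) (exp_pos _).le
      _ = exp (-((K - A - C) * m)) := by rw [← exp_add]; ring_nf
      _ ≤ _ := exp_neg_le_one_sub_half hx0 hx1
  have hβL : β * (1 / L) ≤ β * m := by gcongr
  have hKL := abs_le.1 (abs_mul_one_sub_div_sq_le (by linarith) hL hM hKM)
  have hβm : (β + 3) * m ≤ (K - A - C) * m / 2 := by nlinarith
  linarith [mul_one_div β L]

theorem le_exp_log_div_add_mul {β c₀ C K L M : ℝ} (hβ : 0 ≤ β) (hC : 0 ≤ C)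
    (hK : β * |c₀| + 2 * C + 3 ≤ K) (hM : 1 ≤ M) (hML : (K + 2 * (β + |c₀|)) * M ≤ L) :
    1 - β / L - K * (1 - M) / L ^ 2
      ≤ exp (β * log (L / (L - β * M + c₀ - K * (M / L))) + K * (M / L)) * (1 - C / L) -
          2 * (M / L) := by
  set m := M / L
  have hM0 : 0 < M := by linarith
  have hc₀M := le_mul_of_one_le_right (abs_nonneg c₀) hM
  have hβc₀ : 0 ≤ β * |c₀| := by positivity
  have hKM : K * M ≤ L := by linarith [mul_nonneg (by positivity : 0 ≤ 2 * (β + |c₀|)) hM0.le]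
  have hL : 0 < L := by nlinarith
  have hm : 0 < m := div_pos hM0 hL
  have hLm : 1 / L ≤ m := div_le_div_of_nonneg_right hM hL.le
  have hKm : K * m ≤ 1 := by rw [mul_div_assoc', div_le_one hL]; exact hKM
  have hv : 0 < L - β * M + c₀ - K * m := by nlinarith [neg_abs_le c₀]
  have hlog : -(β * |c₀| * m) ≤ β * log (L / (L - β * M + c₀ - K * m)) := by
    have h : -(|c₀| * m) ≤ log (L / (L - β * M + c₀ - K * m)) :=
      calc -(|c₀| * m) ≤ -(|c₀| * (1 / L)) := by gcongr
        _ ≤ (L - (L - β * M + c₀ - K * m)) / L := by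
          rw [mul_one_div, ← neg_div]
          gcongr
          nlinarith [le_abs_self c₀]
        _ = 1 - (L / (L - β * M + c₀ - K * m))⁻¹ := by field_simp
        _ ≤ _ := one_sub_inv_le_log_of_pos (div_pos hL hv)
    nlinarith
  have hy1 : (K - β * |c₀|) * m ≤ 1 := by linarith [mul_nonneg hβc₀ hm.le]
  have hCm0 : 0 ≤ C * m := by positivity
  have hCm : C * m ≤ 1 := by nlinarith
  have hprod : (1 + (K - β * |c₀|) * m) * (1 - C * m)
      ≤ exp (β * log (L / (L - β * M + c₀ - K * m)) + K * m) * (1 - C / L) := by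
    have hCL : C * (1 / L) ≤ C * m := by gcongr
    refine mul_le_mul ?_ (by linarith [mul_one_div C L]) (by linarith) (exp_pos _).le
    linarith [add_one_le_exp ((K - β * |c₀|) * m),
      exp_le_exp.2 (show (K - β * |c₀|) * m ≤ β * log (L / (L - β * M + c₀ - K * m)) + K * m by
        linarith)]
  have hKL := abs_le.1 (abs_mul_one_sub_div_sq_le (by linarith) hL hM hKM)
  have hβL : 0 ≤ β / L := by positivity
  nlinarith [mul_le_mul_of_nonneg_right hy1 hCm0]

theorem eventually_barrier_supersolution {β C K : ℝ} (c₀ : ℝ) (hβ : 0 ≤ β) (hC : 0 ≤ C)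
    (hK : 2 * β * (β + |c₀|) + C + 2 * β + 6 ≤ K) :
    ∀ᶠ t in atTop, modulationRate β c₀ (barrier β c₀ K t) * (1 + C / log t) +
      2 * log (log t) / (t * log t) ≤ (1 - β / log t + K * (1 - log (log t)) / log t ^ 2) / t := by
  filter_upwards [eventually_gt_atTop 1, tendsto_log_log_atTop.eventually_ge_atTop 1,
    eventually_mul_log_log_le_log (K + 2 * (β + |c₀|)), eventually_pos_barrier β c₀ K]
    with t ht hM hML hu
  have ht0 : 0 < t := by linarith
  rw [le_div_iff₀ ht0]
  calc _ = t * modulationRate β c₀ (barrier β c₀ K t) * (1 + C / log t) +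
        2 * (log (log t) / log t) := by field_simp
    _ ≤ _ := by
      rw [mul_modulationRate_barrier β c₀ K ht hu]
      exact exp_log_div_sub_mul_le hβ hC hK hM hML

theorem eventually_barrier_subsolution {β C K : ℝ} (c₀ : ℝ) (hβ : 0 ≤ β) (hC : 0 ≤ C)
    (hK : β * |c₀| + 2 * C + 3 ≤ K) :
    ∀ᶠ t in atTop, (1 - β / log t + -K * (1 - log (log t)) / log t ^ 2) / t ≤
      modulationRate β c₀ (barrier β c₀ (-K) t) * (1 - C / log t) -
        2 * log (log t) / (t * log t) := by
  filter_upwards [eventually_gt_atTop 1, tendsto_log_log_atTop.eventually_ge_atTop 1,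
    eventually_mul_log_log_le_log (K + 2 * (β + |c₀|)), eventually_pos_barrier β c₀ (-K)]
    with t ht hM hML hv
  have ht0 : 0 < t := by linarith
  have hbarrier : barrier β c₀ (-K) t =
      log t - β * log (log t) + c₀ - K * (log (log t) / log t) := by
    unfold barrier; ring
  have hexp : exp (β * log (log t / barrier β c₀ (-K) t) + K * (log (log t) / log t)) =
      t * modulationRate β c₀ (barrier β c₀ (-K) t) := by
    rw [mul_modulationRate_barrier β c₀ (-K) ht hv, neg_mul, sub_neg_eq_add]
  rw [div_le_iff₀ ht0]
  calc _ = 1 - β / log t - K * (1 - log (log t)) / log t ^ 2 := by ring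
    _ ≤ exp (β * log (log t / barrier β c₀ (-K) t) + K * (log (log t) / log t)) *
          (1 - C / log t) - 2 * (log (log t) / log t) := by
      rw [hbarrier]
      exact le_exp_log_div_add_mul hβ hC hK hM hML
    _ = _ := by
      rw [hexp]
      field_simp

theorem eventually_le_barrier {β c₀ C K : ℝ} {r h : ℝ → ℝ} (hβ : 0 ≤ β) (hC : 0 ≤ C)
    (hK : 2 * β * (β + |c₀|) + C + 2 * β + 6 ≤ K)
    (hr' : ∀ᶠ t in atTop, HasDerivAt r (modulationRate β c₀ (r t) * (1 + h t)) t)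
    (hh : ∀ᶠ t in atTop, |h t| ≤ C / log t) : ∀ᶠ t in atTop, r t ≤ barrier β c₀ K t := by
  refine (eventually_nonpos_of_hasDerivAt_le_neg_log_log (φ := fun t => r t - barrier β c₀ K t)
    (φ' := fun t => modulationRate β c₀ (r t) * (1 + h t) -
      (1 - β / log t + K * (1 - log (log t)) / log t ^ 2) / t) ?_ ?_).mono
    fun t ht => sub_nonpos.1 ht
  · filter_upwards [hr', eventually_gt_atTop 1] with t hr ht
    exact hr.sub (hasDerivAt_barrier β c₀ K ht)
  filter_upwards [hh, eventually_barrier_supersolution c₀ hβ hC hK, eventually_pos_barrier β c₀ K,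
    eventually_gt_atTop 1] with t hht hsuper hu ht hφt
  have hur : barrier β c₀ K t ≤ r t := sub_nonneg.1 hφt
  have hrate : modulationRate β c₀ (r t) * (1 + h t) ≤
      modulationRate β c₀ (barrier β c₀ K t) * (1 + C / log t) :=
    calc _ ≤ modulationRate β c₀ (r t) * (1 + C / log t) :=
          mul_le_mul_of_nonneg_left (by linarith [(abs_le.1 hht).2])
            (modulationRate_nonneg β c₀ (hu.trans_le hur).le)
      _ ≤ _ := mul_le_mul_of_nonneg_right
          (modulationRate_antitoneOn hβ c₀ hu (hu.trans_le hur) hur)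
          (by have := log_pos ht; positivity)
  linarith

theorem eventually_barrier_le {β c₀ C K : ℝ} {r h : ℝ → ℝ} (hβ : 0 ≤ β) (hC : 0 ≤ C)
    (hK : β * |c₀| + 2 * C + 3 ≤ K) (hrpos : ∀ᶠ t in atTop, 0 < r t)
    (hr' : ∀ᶠ t in atTop, HasDerivAt r (modulationRate β c₀ (r t) * (1 + h t)) t)
    (hh : ∀ᶠ t in atTop, |h t| ≤ C / log t) : ∀ᶠ t in atTop, barrier β c₀ (-K) t ≤ r t := by
  refine (eventually_nonpos_of_hasDerivAt_le_neg_log_log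
    (φ := fun t => barrier β c₀ (-K) t - r t)
    (φ' := fun t => (1 - β / log t + -K * (1 - log (log t)) / log t ^ 2) / t -
      modulationRate β c₀ (r t) * (1 + h t)) ?_ ?_).mono fun t ht => sub_nonpos.1 ht
  · filter_upwards [hr', eventually_gt_atTop 1] with t hr ht
    exact (hasDerivAt_barrier β c₀ (-K) ht).sub hr
  filter_upwards [hh, hrpos, eventually_barrier_subsolution c₀ hβ hC hK,
    eventually_pos_barrier β c₀ (-K), tendsto_log_atTop.eventually_ge_atTop C]
    with t hht hr hsub hv hCL hφt
  have hrv : r t ≤ barrier β c₀ (-K) t := sub_nonneg.1 hφt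
  have hrate : modulationRate β c₀ (barrier β c₀ (-K) t) * (1 - C / log t) ≤
      modulationRate β c₀ (r t) * (1 + h t) :=
    calc _ ≤ modulationRate β c₀ (r t) * (1 - C / log t) :=
          mul_le_mul_of_nonneg_right (modulationRate_antitoneOn hβ c₀ hr hv hrv)
            (sub_nonneg.2 (div_le_one_of_le₀ hCL (hC.trans hCL)))
      _ ≤ _ := mul_le_mul_of_nonneg_left (by linarith [(abs_le.1 hht).1])
            (modulationRate_nonneg β c₀ hr.le)
  linarith

theorem modulation_ODE_asymptotics_general (β c₀ C T : ℝ) (hβ : 0 ≤ β) (hC : 0 < C)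
    (r h : ℝ → ℝ)
    (hrpos : ∀ t, T ≤ t → 0 < r t)
    (hr' : ∀ t, T ≤ t →
      HasDerivAt r (r t ^ (-β) * Real.exp (-r t + c₀) * (1 + h t)) t)
    (hh : ∀ t, T ≤ t → |h t| ≤ C / Real.log t) :
    ∃ C' > 0, ∃ T' ≥ T, ∀ t ≥ T',
      |r t - (Real.log t - β * Real.log (Real.log t) + c₀)| ≤
        C' * Real.log (Real.log t) / Real.log t := by
  set K := 2 * β * (β + |c₀|) + 2 * β + 2 * C + 6
  have hK : 0 < K := by positivity
  have hr'_ev : ∀ᶠ t in atTop, HasDerivAt r (modulationRate β c₀ (r t) * (1 + h t)) t :=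
    eventually_atTop.2 ⟨T, hr'⟩
  have hh_ev : ∀ᶠ t in atTop, |h t| ≤ C / log t := eventually_atTop.2 ⟨T, hh⟩
  have hupper := eventually_le_barrier hβ hC.le (K := K) (by linarith) hr'_ev hh_ev
  have hlower := eventually_barrier_le hβ hC.le (K := K)
    (by nlinarith [mul_nonneg hβ (abs_nonneg c₀)]) (eventually_atTop.2 ⟨T, hrpos⟩) hr'_ev hh_ev
  obtain ⟨T', hT'⟩ := eventually_atTop.1 (hupper.and hlower)
  refine ⟨K, hK, max T T', le_max_left _ _, fun t ht => ?_⟩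
  obtain ⟨hu, hv⟩ := hT' t (le_of_max_le_right ht)
  unfold barrier at hu hv
  rw [abs_le, mul_div_assoc]
  constructor <;> linarith

/-- **Integration of the modulation ODE for the soliton distance.**
Let `β ≥ 0`, `c₀ ∈ ℝ`, `C > 0`, `T ≥ 3` and let `r : [T,∞) → (0,∞)` be differentiable with
`r(t) → ∞` and `r'(t) = r(t)^{-β} e^{-r(t)+c₀} (1 + h(t))`, `|h(t)| ≤ C / ln t`.
Then `r(t) = ln t - β ln ln t + c₀ + O(ln ln t / ln t)` as `t → ∞`. -/
theorem modulation_ODE_asymptotics (β c₀ C T : ℝ) (hβ : 0 ≤ β) (hC : 0 < C) (hT : 3 ≤ T)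
    (r h : ℝ → ℝ)
    (hrpos : ∀ t, T ≤ t → 0 < r t)
    (hrtop : Tendsto r atTop atTop)
    (hr' : ∀ t, T ≤ t →
      HasDerivAt r (r t ^ (-β) * Real.exp (-r t + c₀) * (1 + h t)) t)
    (hh : ∀ t, T ≤ t → |h t| ≤ C / Real.log t) :
    ∃ C' > 0, ∃ T' ≥ T, ∀ t ≥ T',
      |r t - (Real.log t - β * Real.log (Real.log t) + c₀)| ≤
        C' * Real.log (Real.log t) / Real.log t :=
  modulation_ODE_asymptotics_general β c₀ C T hβ hC r h hrpos hr' hh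
end
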